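/- arXiv:2603.29639 — 8 statements merged into one kernel-verified Lean document; each statement's English description precedes it below -/
import Mathlib

section
/- With H, π, γ, η as above, the convolution inverse of η is given by η⁻¹(u) = γ(π(u₁)) S(u₂) for all u ∈ H, and moreover γ(π(u)) = η⁻¹(u₁) u₂ for all u ∈ H. -/
/-!
In the convolution algebra `WithConv (H →ₗ[k] H)` we have `η = id ⋆ (γ⁻¹ ∘ π)`, and precomposing
with the coalgebra map `π` preserves convolution inverses, so `γ ∘ π` and `γ⁻¹ ∘ π` are mutually
inverse. Hence `η⁻¹ = (γ ∘ π) ⋆ S`, and `η⁻¹ ⋆ id = (γ ∘ π) ⋆ S ⋆ id = γ ∘ π`.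
-/

open TensorProduct WithConv

namespace LinearMap

variable {R A B C : Type*} [CommSemiring R] [Semiring A] [Algebra R A]
  [AddCommMonoid B] [Module R B] [Coalgebra R B] [AddCommMonoid C] [Module R C] [Coalgebra R C]

lemma toConv_mul_toConv_eq_one_iff {f g : C →ₗ[R] A} :
    toConv f * toConv g = 1 ↔
      ∀ c : C, mul' R A (map f g (Coalgebra.comul c)) = Coalgebra.counit (R := R) c • (1 : A) := by
  simp only [WithConv.ext_iff, LinearMap.ext_iff, convMul_apply, convOne_apply,
    Algebra.algebraMap_eq_smul_one]

lemma comp_coalgHom_mul_comp_coalgHom_eq_one {f g : C →ₗ[R] A} (hfg : toConv f * toConv g = 1)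
    (π : B →ₗc[R] C) : toConv (f ∘ₗ π.toLinearMap) * toConv (g ∘ₗ π.toLinearMap) = 1 := by
  apply ofConv_injective
  rw [← convMul_comp_coalgHom_distrib (toConv f) (toConv g) π, hfg]
  ext b
  simp

end LinearMap

theorem stmt2_general {k H Q : Type*} [Field k]
    [Ring H] [HopfAlgebra k H]
    [Ring Q] [HopfAlgebra k Q]
    (π : H →ₐc[k] Q)
    (γ γinv : Q →ₗ[k] H)
    (hinv₁ : ∀ x : Q,
      LinearMap.mul' k H ((TensorProduct.map γ γinv) (Coalgebra.comul (R := k) x)) =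
        (Coalgebra.counit (R := k) x) • (1 : H))
    (hinv₂ : ∀ x : Q,
      LinearMap.mul' k H ((TensorProduct.map γinv γ) (Coalgebra.comul (R := k) x)) =
        (Coalgebra.counit (R := k) x) • (1 : H))
    (η : H →ₗ[k] H)
    (hη : η = LinearMap.mul' k H ∘ₗ
      (TensorProduct.map LinearMap.id (γinv ∘ₗ π.toLinearMap)) ∘ₗ Coalgebra.comul)
    -- ηbar(u) := γ(π(u₁)) S(u₂)
    (ηbar : H →ₗ[k] H)
    (hηbar : ηbar = LinearMap.mul' k H ∘ₗ
      (TensorProduct.map (γ ∘ₗ π.toLinearMap) (HopfAlgebra.antipode (R := k))) ∘ₗ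
        Coalgebra.comul) :
    -- ηbar is the convolution inverse of η ...
    (∀ u : H,
      LinearMap.mul' k H ((TensorProduct.map η ηbar) (Coalgebra.comul (R := k) u)) =
        (Coalgebra.counit (R := k) u) • (1 : H)) ∧
    (∀ u : H,
      LinearMap.mul' k H ((TensorProduct.map ηbar η) (Coalgebra.comul (R := k) u)) =
        (Coalgebra.counit (R := k) u) • (1 : H)) ∧
    -- ... and γ(π(u)) = ηbar(u₁) u₂
    (∀ u : H,
      γ (π u) =
        LinearMap.mul' k H
          ((TensorProduct.map ηbar LinearMap.id) (Coalgebra.comul (R := k) u))) := by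
  set f := toConv (γ ∘ₗ π.toLinearMap)
  set g := toConv (γinv ∘ₗ π.toLinearMap)
  have hfg : f * g = 1 := LinearMap.comp_coalgHom_mul_comp_coalgHom_eq_one
    (LinearMap.toConv_mul_toConv_eq_one_iff.mpr hinv₁) π.toCoalgHom
  have hgf : g * f = 1 := LinearMap.comp_coalgHom_mul_comp_coalgHom_eq_one
    (LinearMap.toConv_mul_toConv_eq_one_iff.mpr hinv₂) π.toCoalgHom
  have hη' : toConv η = toConv LinearMap.id * g := by rw [hη]; rfl
  have hηbar' : toConv ηbar = f * toConv (HopfAlgebra.antipode k) := by rw [hηbar]; rfl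
  refine ⟨LinearMap.toConv_mul_toConv_eq_one_iff.mp ?_,
    LinearMap.toConv_mul_toConv_eq_one_iff.mp ?_, fun u => ?_⟩
  · rw [hη', hηbar', mul_assoc, ← mul_assoc g, hgf, one_mul, LinearMap.id_mul_antipode]
  · rw [hη', hηbar', mul_assoc, ← mul_assoc _ (toConv LinearMap.id), LinearMap.antipode_mul_id,
      one_mul, hfg]
  · have hf : toConv ηbar * toConv LinearMap.id = f := by
      rw [hηbar', mul_assoc, LinearMap.antipode_mul_id, mul_one]
    exact congr($hf u).symm

theorem stmt2 {k H Q : Type*} [Field k]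
    [Ring H] [HopfAlgebra k H]
    [Ring Q] [HopfAlgebra k Q]
    (π : H →ₐc[k] Q) (hπ : Function.Surjective π)
    (γ γinv : Q →ₗ[k] H)
    (hεγ : ∀ x : Q, Coalgebra.counit (R := k) (γ x) = Coalgebra.counit (R := k) x)
    (hπγ : ∀ x : Q, π (γ x) = x)
    (hcolin : ∀ x : Q,
      (TensorProduct.map γ LinearMap.id) (Coalgebra.comul (R := k) x) =
      (TensorProduct.map LinearMap.id π.toLinearMap) (Coalgebra.comul (R := k) (γ x)))
    (hinv₁ : ∀ x : Q,
      LinearMap.mul' k H ((TensorProduct.map γ γinv) (Coalgebra.comul (R := k) x)) =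
        (Coalgebra.counit (R := k) x) • (1 : H))
    (hinv₂ : ∀ x : Q,
      LinearMap.mul' k H ((TensorProduct.map γinv γ) (Coalgebra.comul (R := k) x)) =
        (Coalgebra.counit (R := k) x) • (1 : H))
    (η : H →ₗ[k] H)
    (hη : η = LinearMap.mul' k H ∘ₗ
      (TensorProduct.map LinearMap.id (γinv ∘ₗ π.toLinearMap)) ∘ₗ Coalgebra.comul)
    -- ηbar(u) := γ(π(u₁)) S(u₂)
    (ηbar : H →ₗ[k] H)
    (hηbar : ηbar = LinearMap.mul' k H ∘ₗ
      (TensorProduct.map (γ ∘ₗ π.toLinearMap) (HopfAlgebra.antipode (R := k))) ∘ₗ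
        Coalgebra.comul) :
    -- ηbar is the convolution inverse of η ...
    (∀ u : H,
      LinearMap.mul' k H ((TensorProduct.map η ηbar) (Coalgebra.comul (R := k) u)) =
        (Coalgebra.counit (R := k) u) • (1 : H)) ∧
    (∀ u : H,
      LinearMap.mul' k H ((TensorProduct.map ηbar η) (Coalgebra.comul (R := k) u)) =
        (Coalgebra.counit (R := k) u) • (1 : H)) ∧
    -- ... and γ(π(u)) = ηbar(u₁) u₂
    (∀ u : H,
      γ (π u) =
        LinearMap.mul' k H
          ((TensorProduct.map ηbar LinearMap.id) (Coalgebra.comul (R := k) u))) :=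
  stmt2_general π γ γinv hinv₁ hinv₂ η hη ηbar hηbar
end

section
/- Let H be a cocommutative Hopf algebra with surjection π : H → Q and a section γ of π that is both convolution-invertible, counital, colinear, and additionally a coalgebra map. Set η := id ⋆ (γ⁻¹∘π) and define τ̄ : Q → H ⊗ H by τ̄(x) = η⁻¹(γ(x)₁)₁ η(γ(x)₂) ⊗ η⁻¹(γ(x)₁)₂ η(γ(x)₃). Then τ̄ is trivial, i.e. τ̄(x) = ε(x)·(1 ⊗ 1) for all x ∈ Q. -/
/-!
Since γ is a coalgebra map, precomposition with γ is multiplicative for the convolution product.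
As π ∘ γ = id, this gives η ∘ γ = γ ⋆ γ⁻¹ = ε, and then η⁻¹ ∘ γ = ε as well. Writing τ̄ as the
convolution of Δ ∘ η⁻¹ ∘ γ with (η ⊗ η) ∘ Δ ∘ γ = (η ∘ γ ⊗ η ∘ γ) ∘ Δ, both factors are the
convolution unit x ↦ ε(x) 1.
-/

open TensorProduct Coalgebra WithConv

namespace LinearMap
variable {R A B C D : Type*} [CommSemiring R]

lemma comp_coalgHom_eq_one_of_convMul_eq_one [Semiring A] [Algebra R A]
    [AddCommMonoid C] [Module R C] [Coalgebra R C] [AddCommMonoid D] [Module R D] [Coalgebra R D]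
    (g : C →ₗc[R] D) {φ ψ : D →ₗ[R] A} (h : toConv φ * toConv ψ = 1)
    (hφ : φ ∘ₗ g.toLinearMap = (1 : WithConv (C →ₗ[R] A)).ofConv) :
    ψ ∘ₗ g.toLinearMap = (1 : WithConv (C →ₗ[R] A)).ofConv := by
  have h1 : (1 : WithConv (D →ₗ[R] A)).ofConv ∘ₗ g.toLinearMap =
      (1 : WithConv (C →ₗ[R] A)).ofConv := by
    ext; simp
  have := congr(ofConv $h ∘ₗ g.toLinearMap)
  rw [convMul_comp_coalgHom_distrib, hφ, h1, toConv_ofConv, one_mul, ofConv_toConv] at this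
  exact this

lemma comul_comp_convOne [Semiring A] [Bialgebra R A] [AddCommMonoid C] [Module R C]
    [Coalgebra R C] :
    comul ∘ₗ (1 : WithConv (C →ₗ[R] A)).ofConv = (1 : WithConv (C →ₗ[R] A ⊗[R] A)).ofConv := by
  ext; simp

lemma map_convOne_comp_comul [Semiring A] [Algebra R A] [Semiring B] [Algebra R B]
    [AddCommMonoid C] [Module R C] [Coalgebra R C] :
    map (1 : WithConv (C →ₗ[R] A)).ofConv (1 : WithConv (C →ₗ[R] B)).ofConv ∘ₗ comul =
      (1 : WithConv (C →ₗ[R] A ⊗[R] B)).ofConv := by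
  ext c
  have hε : map (counit (R := R) (A := C)) counit (comul c) = counit c ⊗ₜ 1 := by
    rw [← rTensor_comp_lTensor, comp_apply, lTensor_counit_comul, rTensor_tmul]
  rw [convOne_def, convOne_def, ofConv_toConv, ofConv_toConv, map_comp,
    comp_apply, comp_apply, hε]
  simp [Algebra.TensorProduct.algebraMap_apply]

lemma id_convMul_comp_coalgHom_of_comp_eq_id [Semiring A] [Algebra R A] [Coalgebra R A]
    [AddCommMonoid C] [Module R C] [CoalgebraStruct R C]
    (g : C →ₗc[R] A) (p : A →ₗ[R] C) (hpg : p ∘ₗ g.toLinearMap = LinearMap.id) (f : C →ₗ[R] A) :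
    (toConv LinearMap.id * toConv (f ∘ₗ p)).ofConv ∘ₗ g.toLinearMap =
      (toConv g.toLinearMap * toConv f).ofConv := by
  rw [convMul_comp_coalgHom_distrib, comp_assoc, hpg]
  rfl

lemma map_mul'_comp_map_comp_comul_comp_coalgHom_eq_convMul [Semiring A] [Algebra R A]
    [Semiring B] [Algebra R B] [AddCommMonoid C] [Module R C] [CoalgebraStruct R C]
    [AddCommMonoid D] [Module R D] [CoalgebraStruct R D]
    (g : C →ₗc[R] D) (F : D →ₗ[R] A ⊗[R] B) (G : D ⊗[R] D →ₗ[R] A ⊗[R] B) :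
    map (mul' R A) (mul' R B) ∘ₗ (tensorTensorTensorComm R A B A B).toLinearMap ∘ₗ map F G ∘ₗ
      map LinearMap.id comul ∘ₗ comul ∘ₗ g.toLinearMap =
      (toConv (F ∘ₗ g.toLinearMap) * toConv (G ∘ₗ comul ∘ₗ g.toLinearMap)).ofConv := by
  rw [convMul_def, ofConv_toConv, mul'_tensor, map_comp F G, ← lTensor_comp_map,
    ← g.map_comp_comul]
  simp only [comp_assoc]
  rfl

end LinearMap

theorem stmt4_general {k H Q : Type*} [Field k]
    [Ring H] [HopfAlgebra k H]
    [Ring Q] [HopfAlgebra k Q]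
    (π : H →ₐc[k] Q)
    (γ γinv : Q →ₗ[k] H)
    (hεγ : ∀ x : Q, Coalgebra.counit (R := k) (γ x) = Coalgebra.counit (R := k) x)
    (hπγ : ∀ x : Q, π (γ x) = x)
    -- γ is moreover a coalgebra map
    (hγcoalg : ∀ x : Q,
      Coalgebra.comul (R := k) (γ x) = (TensorProduct.map γ γ) (Coalgebra.comul (R := k) x))
    (hinv₁ : ∀ x : Q,
      LinearMap.mul' k H ((TensorProduct.map γ γinv) (Coalgebra.comul (R := k) x)) =
        (Coalgebra.counit (R := k) x) • (1 : H))
    -- η := id ⋆ (γ⁻¹ ∘ π), with convolution inverse ηinv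
    (η ηinv : H →ₗ[k] H)
    (hη : η = LinearMap.mul' k H ∘ₗ
      (TensorProduct.map LinearMap.id (γinv ∘ₗ π.toLinearMap)) ∘ₗ Coalgebra.comul)
    (hηinv₁ : ∀ u : H,
      LinearMap.mul' k H ((TensorProduct.map η ηinv) (Coalgebra.comul (R := k) u)) =
        (Coalgebra.counit (R := k) u) • (1 : H))
    -- τ̄ : Q → H ⊗ H
    (τbar : Q →ₗ[k] H ⊗[k] H)
    (hτbar : τbar =
      (TensorProduct.map (LinearMap.mul' k H) (LinearMap.mul' k H)) ∘ₗ
      (TensorProduct.tensorTensorTensorComm k H H H H).toLinearMap ∘ₗ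
      (TensorProduct.map (Coalgebra.comul (R := k) ∘ₗ ηinv) (TensorProduct.map η η)) ∘ₗ
      (TensorProduct.map LinearMap.id (Coalgebra.comul (R := k))) ∘ₗ
      (Coalgebra.comul (R := k)) ∘ₗ γ) :
    -- conclusion: τ̄ is trivial
    ∀ x : Q, τbar x = (Coalgebra.counit (R := k) x) • ((1 : H) ⊗ₜ[k] (1 : H)) := by
  let Γ : Q →ₗc[k] H :=
    { γ with
      counit_comp := LinearMap.ext hεγ
      map_comp_comul := LinearMap.ext fun x => (hγcoalg x).symm }
  have hγ_mul_γinv : toConv γ * toConv γinv = 1 := by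
    ext x; simp [hinv₁, Algebra.algebraMap_eq_smul_one]
  have hη_mul_ηinv : toConv η * toConv ηinv = 1 := by
    ext u; simp [hηinv₁, Algebra.algebraMap_eq_smul_one]
  have hηγ : η ∘ₗ γ = (1 : WithConv (Q →ₗ[k] H)).ofConv := by
    rw [hη, ← hγ_mul_γinv]
    exact LinearMap.id_convMul_comp_coalgHom_of_comp_eq_id Γ π.toLinearMap (LinearMap.ext hπγ) γinv
  have hηinvγ : ηinv ∘ₗ γ = (1 : WithConv (Q →ₗ[k] H)).ofConv :=
    LinearMap.comp_coalgHom_eq_one_of_convMul_eq_one Γ hη_mul_ηinv hηγ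
  have hτ : τbar = (1 : WithConv (Q →ₗ[k] H ⊗[k] H)).ofConv := by
    have hΓ : Γ.toLinearMap = γ := rfl
    have hcomulγ : comul ∘ₗ γ = map γ γ ∘ₗ comul := Γ.map_comp_comul.symm
    rw [hτbar, LinearMap.map_mul'_comp_map_comp_comul_comp_coalgHom_eq_convMul Γ, hΓ,
      LinearMap.comp_assoc, hηinvγ, LinearMap.comul_comp_convOne, hcomulγ,
      ← LinearMap.comp_assoc, ← map_comp, hηγ, LinearMap.map_convOne_comp_comul, toConv_ofConv, one_mul]
  intro x
  rw [hτ, LinearMap.convOne_apply, Algebra.algebraMap_eq_smul_one, Algebra.TensorProduct.one_def]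

theorem stmt4 {k H Q : Type*} [Field k]
    [Ring H] [HopfAlgebra k H]
    [Ring Q] [HopfAlgebra k Q]
    -- H is cocommutative
    (hcocomm : ∀ u : H,
      (TensorProduct.comm k H H) (Coalgebra.comul (R := k) u) = Coalgebra.comul (R := k) u)
    (π : H →ₐc[k] Q) (hπ : Function.Surjective π)
    (γ γinv : Q →ₗ[k] H)
    (hεγ : ∀ x : Q, Coalgebra.counit (R := k) (γ x) = Coalgebra.counit (R := k) x)
    (hπγ : ∀ x : Q, π (γ x) = x)
    (hcolin : ∀ x : Q,
      (TensorProduct.map γ LinearMap.id) (Coalgebra.comul (R := k) x) =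
      (TensorProduct.map LinearMap.id π.toLinearMap) (Coalgebra.comul (R := k) (γ x)))
    -- γ is moreover a coalgebra map
    (hγcoalg : ∀ x : Q,
      Coalgebra.comul (R := k) (γ x) = (TensorProduct.map γ γ) (Coalgebra.comul (R := k) x))
    (hinv₁ : ∀ x : Q,
      LinearMap.mul' k H ((TensorProduct.map γ γinv) (Coalgebra.comul (R := k) x)) =
        (Coalgebra.counit (R := k) x) • (1 : H))
    (hinv₂ : ∀ x : Q,
      LinearMap.mul' k H ((TensorProduct.map γinv γ) (Coalgebra.comul (R := k) x)) =
        (Coalgebra.counit (R := k) x) • (1 : H))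
    -- η := id ⋆ (γ⁻¹ ∘ π), with convolution inverse ηinv
    (η ηinv : H →ₗ[k] H)
    (hη : η = LinearMap.mul' k H ∘ₗ
      (TensorProduct.map LinearMap.id (γinv ∘ₗ π.toLinearMap)) ∘ₗ Coalgebra.comul)
    (hηinv₁ : ∀ u : H,
      LinearMap.mul' k H ((TensorProduct.map η ηinv) (Coalgebra.comul (R := k) u)) =
        (Coalgebra.counit (R := k) u) • (1 : H))
    (hηinv₂ : ∀ u : H,
      LinearMap.mul' k H ((TensorProduct.map ηinv η) (Coalgebra.comul (R := k) u)) =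
        (Coalgebra.counit (R := k) u) • (1 : H))
    -- τ̄ : Q → H ⊗ H
    (τbar : Q →ₗ[k] H ⊗[k] H)
    (hτbar : τbar =
      (TensorProduct.map (LinearMap.mul' k H) (LinearMap.mul' k H)) ∘ₗ
      (TensorProduct.tensorTensorTensorComm k H H H H).toLinearMap ∘ₗ
      (TensorProduct.map (Coalgebra.comul (R := k) ∘ₗ ηinv) (TensorProduct.map η η)) ∘ₗ
      (TensorProduct.map LinearMap.id (Coalgebra.comul (R := k))) ∘ₗ
      (Coalgebra.comul (R := k)) ∘ₗ γ) :
    -- conclusion: τ̄ is trivial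
    ∀ x : Q, τbar x = (Coalgebra.counit (R := k) x) • ((1 : H) ⊗ₜ[k] (1 : H)) :=
  stmt4_general π γ γinv hεγ hπγ hγcoalg hinv₁ η ηinv hη hηinv₁ τbar hτbar
end

section
/- Let H be a Hopf algebra with surjection π : H → Q, convolution-invertible counital colinear section γ, and η := id ⋆ (γ⁻¹∘π). Then for all u, ũ ∈ H: η(uũ) = η(u₁) γ(π(u₂))₁ η(ũ₁) S(γ(π(u₂))₂) η(γ(π(u₂))₃ γ(π(ũ₂))). -/
open TensorProduct

/-!
Write `θ = γ⁻¹ ∘ π` and `g = γ ∘ π`. In the convolution algebra `End(H)` we have `η = id ⋆ θ`, and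
`θ ⋆ g = (γ⁻¹ ⋆ γ) ∘ π = ε` because `π` is a coalgebra map, so `η ⋆ g = id`.

The right-hand side is `mul'` applied to `(η ⊗ η) ⋆ Ψ`, a convolution of maps `H ⊗ H → H ⊗ H`, where
`Ψ (u ⊗ v) = g(u)₁ ⊗ S(g(u)₂) η(g(u)₃ g(v))`. Since `η(a b) = a₁ b₁ θ(a₂ b₂)`, the factor
`S(a₂) a₃` cancels and `Ψ (u ⊗ v) = g(u)₁ ⊗ g(v)₁ θ(g(u)₂ g(v)₂)`; colinearity of `γ` turns this into
`((g ⊗ g) ⋆ (1 ⊗ θ ∘ mul)) (u ⊗ v)`. Finally `(η ⊗ η) ⋆ (g ⊗ g) = (η ⋆ g) ⊗ (η ⋆ g) = id`, which leaves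
`u₁ v₁ θ(u₂ v₂) = η(u v)`.
-/

open Coalgebra WithConv

section Algebra
variable {k C A : Type*} [CommSemiring k] [Semiring A] [Algebra k A]
  [AddCommMonoid C] [Module k C] [CoalgebraStruct k C]

theorem mul'_comp_convMul_mk_one (F : C →ₗ[k] A ⊗[k] A) (f : C →ₗ[k] A) :
    LinearMap.mul' k A ∘ₗ (toConv F * toConv (TensorProduct.mk k A A 1 ∘ₗ f)).ofConv =
      (toConv (LinearMap.mul' k A ∘ₗ F) * toConv f).ofConv := by
  have key : LinearMap.mul' k A ∘ₗ LinearMap.mul' k (A ⊗[k] A) ∘ₗ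
      map LinearMap.id (TensorProduct.mk k A A 1) =
        LinearMap.mul' k A ∘ₗ map (LinearMap.mul' k A) LinearMap.id := by
    ext x y z
    simp [mul_assoc]
  have hsplit : map F (TensorProduct.mk k A A 1 ∘ₗ f) =
      map LinearMap.id (TensorProduct.mk k A A 1) ∘ₗ map F f := by
    rw [← map_comp, LinearMap.id_comp]
  simp only [LinearMap.convMul_def, ofConv_toConv, hsplit, ← LinearMap.comp_assoc, key]
  simp only [LinearMap.comp_assoc, ← map_comp, LinearMap.id_comp]

end Algebra

section Colinear
variable {k C D P : Type*} [CommSemiring k]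
  [AddCommMonoid C] [Module k C] [CoalgebraStruct k C]
  [AddCommMonoid D] [Module k D] [CoalgebraStruct k D] [AddCommMonoid P] [Module k P]

/-- `σ` intertwines the right `P`-coactions `(id ⊗ p) ∘ δ` on `C` and `(id ⊗ p') ∘ δ` on `D`. -/
def IsColinear (σ : D →ₗ[k] C) (p : C →ₗ[k] P) (p' : D →ₗ[k] P) : Prop :=
  map LinearMap.id p ∘ₗ comul ∘ₗ σ = map σ p' ∘ₗ comul

theorem IsColinear.convMul_comp {A : Type*} [Semiring A] [Algebra k A]
    {σ : D →ₗ[k] C} {p : C →ₗ[k] P} {p' : D →ₗ[k] P}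
    (h : IsColinear σ p p') (f : C →ₗ[k] A) (K : P →ₗ[k] A) :
    (toConv f * toConv (K ∘ₗ p)).ofConv ∘ₗ σ = (toConv (f ∘ₗ σ) * toConv (K ∘ₗ p')).ofConv := by
  unfold IsColinear at h
  have hsplit : map f (K ∘ₗ p) = map f K ∘ₗ map LinearMap.id p := by
    rw [← map_comp, LinearMap.comp_id]
  simp only [LinearMap.convMul_def, ofConv_toConv, LinearMap.comp_assoc, hsplit, h, map_comp]

variable {C' D' P' : Type*}
  [AddCommMonoid C'] [Module k C'] [CoalgebraStruct k C']
  [AddCommMonoid D'] [Module k D'] [CoalgebraStruct k D'] [AddCommMonoid P'] [Module k P']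

theorem IsColinear.map {σ : D →ₗ[k] C} {p : C →ₗ[k] P} {p' : D →ₗ[k] P}
    {τ : D' →ₗ[k] C'} {q : C' →ₗ[k] P'} {q' : D' →ₗ[k] P'}
    (hσ : IsColinear σ p p') (hτ : IsColinear τ q q') :
    IsColinear (map σ τ) (map p q) (map p' q') := by
  unfold IsColinear at *
  simp only [TensorProduct.comul_def, AlgebraTensorModule.tensorTensorTensorComm_eq,
    AlgebraTensorModule.map_eq]
  rw [← map_id]
  simp only [← LinearMap.comp_assoc, ← tensorTensorTensorComm_comp_map]
  simp only [LinearMap.comp_assoc, ← map_comp, hσ, hτ]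

theorem IsColinear.comp_coalgHom {σ : D →ₗ[k] C} {p : C →ₗ[k] P} {p' : D →ₗ[k] P}
    (h : IsColinear σ p p') (π : D' →ₗc[k] D) :
    IsColinear (σ ∘ₗ π.toLinearMap) p (p' ∘ₗ π.toLinearMap) := by
  unfold IsColinear at *
  calc TensorProduct.map LinearMap.id p ∘ₗ comul ∘ₗ σ ∘ₗ π.toLinearMap
      = (TensorProduct.map LinearMap.id p ∘ₗ comul ∘ₗ σ) ∘ₗ π.toLinearMap := rfl
    _ = TensorProduct.map σ p' ∘ₗ TensorProduct.map π.toLinearMap π.toLinearMap ∘ₗ comul := by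
        rw [h, LinearMap.comp_assoc, ← π.map_comp_comul]
    _ = _ := by rw [← LinearMap.comp_assoc, ← TensorProduct.map_comp]

end Colinear

section Coalgebra
variable {k C D A : Type*} [CommSemiring k] [Semiring A] [Algebra k A]
  [AddCommMonoid C] [Module k C] [Coalgebra k C] [AddCommMonoid D] [Module k D] [Coalgebra k D]

theorem convMul_comp_eq_one {f g : D →ₗ[k] A} (h : toConv f * toConv g = 1) (π : C →ₗc[k] D) :
    toConv (f ∘ₗ π.toLinearMap) * toConv (g ∘ₗ π.toLinearMap) = 1 := by
  apply ofConv_injective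
  calc _ = (toConv f * toConv g).ofConv ∘ₗ π.toLinearMap :=
        (LinearMap.convMul_comp_coalgHom_distrib _ _ π).symm
    _ = _ := by
        rw [h]
        ext c
        simp

end Coalgebra

section Bialgebra
variable {k H : Type*} [CommSemiring k] [Semiring H] [Bialgebra k H]

theorem id_convMul_comp_mulRight (θ : H →ₗ[k] H) (b : H) {ι : Type*} (r : Repr k b ι) :
    toConv ((toConv LinearMap.id * toConv θ).ofConv ∘ₗ LinearMap.mulRight k b) =
      ∑ j ∈ r.index, toConv LinearMap.id *
        toConv (LinearMap.mulLeft k (r.left j) ∘ₗ θ ∘ₗ LinearMap.mulRight k (r.right j)) := by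
  ext c
  simp only [LinearMap.comp_apply, LinearMap.mulRight_apply, ((ℛ k c).mul r).convMul_apply,
    WithConv.ofConv_sum, LinearMap.sum_apply, (ℛ k c).convMul_apply]
  simp [Finset.sum_product, Finset.sum_comm (s := r.index), mul_assoc]

theorem mul'_map_tensorTensorTensorComm_comul (F : H ⊗[k] H →ₗ[k] H ⊗[k] H)
    (G : H ⊗[k] H →ₗ[k] H ⊗[k] (H ⊗[k] H)) (u v : H) :
    LinearMap.mul' k H
        ((map (LinearMap.mul' k H) (LinearMap.mul' k H ∘ₗ map LinearMap.id (LinearMap.mul' k H)))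
          ((tensorTensorTensorComm k H H H (H ⊗[k] H)).toLinearMap
            (map F G ((tensorTensorTensorComm k H H H H).toLinearMap
              (comul u ⊗ₜ[k] comul v))))) =
      LinearMap.mul' k H ((toConv F * toConv (map LinearMap.id (LinearMap.mul' k H) ∘ₗ G)).ofConv
        (u ⊗ₜ v)) := by
  have reassoc : LinearMap.mul' k H ∘ₗ map (LinearMap.mul' k H)
        (LinearMap.mul' k H ∘ₗ map LinearMap.id (LinearMap.mul' k H)) ∘ₗ
        (tensorTensorTensorComm k H H H (H ⊗[k] H)).toLinearMap =
      LinearMap.mul' k H ∘ₗ LinearMap.mul' k (H ⊗[k] H) ∘ₗ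
        map LinearMap.id (map LinearMap.id (LinearMap.mul' k H)) := by
    ext a b c d e
    simp [mul_assoc]
  have h := congr($reassoc (map F G (comul (u ⊗ₜ[k] v))))
  simp only [LinearMap.comp_apply, map_map, LinearMap.id_comp] at h
  exact h

end Bialgebra

section HopfAlgebra
variable {k H : Type*} [CommSemiring k] [Semiring H] [HopfAlgebra k H]

theorem antipode_convMul_comp_mulRight (θ : H →ₗ[k] H) (b : H) {ι : Type*} (r : Repr k b ι) :
    toConv (HopfAlgebra.antipode k) *
        toConv ((toConv LinearMap.id * toConv θ).ofConv ∘ₗ LinearMap.mulRight k b) =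
      ∑ j ∈ r.index,
        toConv (LinearMap.mulLeft k (r.left j) ∘ₗ θ ∘ₗ LinearMap.mulRight k (r.right j)) := by
  simp [id_convMul_comp_mulRight θ b r, Finset.mul_sum, ← mul_assoc]

variable (k) in
/-- `a ⊗ b ↦ a₁ ⊗ S(a₂) f(a₃ b)` -/
noncomputable def antipodeTwist (f : H →ₗ[k] H) : H ⊗[k] H →ₗ[k] H ⊗[k] H :=
  map LinearMap.id (LinearMap.mul' k H) ∘ₗ
    map LinearMap.id (map (HopfAlgebra.antipode k) (f ∘ₗ LinearMap.mul' k H)) ∘ₗ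
    map LinearMap.id (TensorProduct.assoc k H H H).toLinearMap ∘ₗ
    (TensorProduct.assoc k H (H ⊗[k] H) H).toLinearMap ∘ₗ
    map (map LinearMap.id comul ∘ₗ comul) LinearMap.id

theorem antipodeTwist_apply_tmul (f : H →ₗ[k] H) (a b : H) :
    antipodeTwist k f (a ⊗ₜ b) = map LinearMap.id
      (toConv (HopfAlgebra.antipode k) * toConv (f ∘ₗ LinearMap.mulRight k b)).ofConv (comul a) := by
  simp only [antipodeTwist, LinearMap.comp_apply, map_tmul, LinearMap.id_apply]
  induction comul (R := k) a using TensorProduct.induction_on with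
  | zero => simp
  | add x y hx hy => simp only [map_add, add_tmul, hx, hy]
  | tmul p q =>
    simp only [map_tmul, LinearMap.id_apply, LinearEquiv.coe_coe, TensorProduct.assoc_tmul,
      LinearMap.convMul_apply]
    congr 1
    induction comul (R := k) q using TensorProduct.induction_on with
    | zero => simp
    | add x y hx hy => simp only [map_add, add_tmul, hx, hy]
    | tmul s t => simp

theorem antipodeTwist_id_convMul (θ : H →ₗ[k] H) :
    antipodeTwist k (toConv LinearMap.id * toConv θ).ofConv =
      (toConv LinearMap.id *
        toConv (TensorProduct.mk k H H 1 ∘ₗ θ ∘ₗ LinearMap.mul' k H)).ofConv := by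
  refine TensorProduct.ext' fun a b => ?_
  rw [antipodeTwist_apply_tmul, antipode_convMul_comp_mulRight θ b (ℛ k b),
    LinearMap.convMul_apply, TensorProduct.comul_tmul, ← (ℛ k a).eq, ← (ℛ k b).eq]
  simp [TensorProduct.sum_tmul, TensorProduct.tmul_sum, Finset.sum_comm (s := (ℛ k b).index)]

theorem map_mul'_comp_eq_antipodeTwist_comp (f g : H →ₗ[k] H) :
    map LinearMap.id (LinearMap.mul' k H) ∘ₗ
        (map LinearMap.id (map (HopfAlgebra.antipode k) (f ∘ₗ LinearMap.mul' k H)) ∘ₗ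
          map LinearMap.id (TensorProduct.assoc k H H H).toLinearMap ∘ₗ
          (TensorProduct.assoc k H (H ⊗[k] H) H).toLinearMap ∘ₗ
          map (map LinearMap.id comul ∘ₗ comul ∘ₗ g) g) =
      antipodeTwist k f ∘ₗ map g g := by
  simp only [antipodeTwist, LinearMap.comp_assoc, ← map_comp, LinearMap.id_comp]

end HopfAlgebra

section Cleft
variable {k H Q : Type*} [CommSemiring k] [Semiring H] [HopfAlgebra k H] [Semiring Q]
  [Bialgebra k Q] (π : H →ₐc[k] Q) {γ γinv : Q →ₗ[k] H}

theorem antipodeTwist_comp_map_eq_convMul (hγ : IsColinear γ π.toLinearMap LinearMap.id) :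
    antipodeTwist k (toConv LinearMap.id * toConv (γinv ∘ₗ π.toLinearMap)).ofConv ∘ₗ
        map (γ ∘ₗ π.toLinearMap) (γ ∘ₗ π.toLinearMap) =
      (toConv (map (γ ∘ₗ π.toLinearMap) (γ ∘ₗ π.toLinearMap)) *
        toConv (TensorProduct.mk k H H 1 ∘ₗ (γinv ∘ₗ π.toLinearMap) ∘ₗ LinearMap.mul' k H)).ofConv := by
  have hmul : TensorProduct.mk k H H 1 ∘ₗ (γinv ∘ₗ π.toLinearMap) ∘ₗ LinearMap.mul' k H =
      (TensorProduct.mk k H H 1 ∘ₗ γinv ∘ₗ LinearMap.mul' k Q) ∘ₗ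
        map π.toLinearMap π.toLinearMap := by
    ext a b
    exact congrArg (fun x => (1 : H) ⊗ₜ[k] γinv x) (map_mul π a b)
  have hg : IsColinear (γ ∘ₗ π.toLinearMap) π.toLinearMap π.toLinearMap :=
    hγ.comp_coalgHom π.toCoalgHom
  rw [antipodeTwist_id_convMul, hmul, (hg.map hg).convMul_comp, LinearMap.id_comp]

end Cleft

theorem stmt5_general {k H Q : Type*} [Field k]
    [Ring H] [HopfAlgebra k H]
    [Ring Q] [HopfAlgebra k Q]
    (π : H →ₐc[k] Q)
    (γ γinv : Q →ₗ[k] H)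
    (hcolin : ∀ x : Q,
      (TensorProduct.map γ LinearMap.id) (Coalgebra.comul (R := k) x) =
      (TensorProduct.map LinearMap.id π.toLinearMap) (Coalgebra.comul (R := k) (γ x)))
    (hinv₂ : ∀ x : Q,
      LinearMap.mul' k H ((TensorProduct.map γinv γ) (Coalgebra.comul (R := k) x)) =
        (Coalgebra.counit (R := k) x) • (1 : H))
    (η : H →ₗ[k] H)
    (hη : η = LinearMap.mul' k H ∘ₗ
      (TensorProduct.map LinearMap.id (γinv ∘ₗ π.toLinearMap)) ∘ₗ Coalgebra.comul) :
    ∀ u v : H,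
      η (u * v) =
        -- η(u₁) · γ(π(u₂))₁ · η(v₁) · S(γ(π(u₂))₂) · η(γ(π(u₂))₃ γ(π(v₂)))
        LinearMap.mul' k H
          ((TensorProduct.map (LinearMap.mul' k H)
              (LinearMap.mul' k H ∘ₗ TensorProduct.map LinearMap.id (LinearMap.mul' k H)))
            ((TensorProduct.tensorTensorTensorComm k H H H (H ⊗[k] H)).toLinearMap
              ((TensorProduct.map (TensorProduct.map η η)
                  -- (u₂ ⊗ v₂) ↦ γπ(u₂)₁ ⊗ (S(γπ(u₂))₂ ⊗ η(γπ(u₂)₃ · γπ(v₂)))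
                  ((TensorProduct.map LinearMap.id
                      (TensorProduct.map (HopfAlgebra.antipode (R := k))
                        (η ∘ₗ LinearMap.mul' k H))) ∘ₗ
                    (TensorProduct.map LinearMap.id
                      (TensorProduct.assoc k H H H).toLinearMap) ∘ₗ
                    (TensorProduct.assoc k H (H ⊗[k] H) H).toLinearMap ∘ₗ
                    (TensorProduct.map
                      ((TensorProduct.map LinearMap.id (Coalgebra.comul (R := k))) ∘ₗ
                        Coalgebra.comul (R := k) ∘ₗ γ ∘ₗ π.toLinearMap)
                      (γ ∘ₗ π.toLinearMap))))
                ((TensorProduct.tensorTensorTensorComm k H H H H).toLinearMap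
                  ((Coalgebra.comul (R := k) u) ⊗ₜ[k] (Coalgebra.comul (R := k) v)))))) := by
  intro u v
  obtain rfl : η = (toConv LinearMap.id * toConv (γinv ∘ₗ π.toLinearMap)).ofConv := hη
  have hγ : IsColinear γ π.toLinearMap LinearMap.id := LinearMap.ext fun x => (hcolin x).symm
  have hinv : toConv γinv * toConv γ = 1 := by
    ext x
    simp [hinv₂, Algebra.algebraMap_eq_smul_one]
  have hηg : toConv (toConv LinearMap.id * toConv (γinv ∘ₗ π.toLinearMap)).ofConv *
      toConv (γ ∘ₗ π.toLinearMap) = toConv LinearMap.id := by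
    rw [toConv_ofConv, mul_assoc, convMul_comp_eq_one hinv π.toCoalgHom, mul_one]
  rw [mul'_map_tensorTensorTensorComm_comul, map_mul'_comp_eq_antipodeTwist_comp,
    antipodeTwist_comp_map_eq_convMul π hγ, ← mul_assoc, map_convMul_map, hηg, ofConv_toConv,
    map_id, ← LinearMap.comp_apply, mul'_comp_convMul_mk_one, LinearMap.comp_id]
  exact congr($(LinearMap.convMul_comp_coalgHom_distrib (toConv LinearMap.id)
    (toConv (γinv ∘ₗ π.toLinearMap)) (Bialgebra.mulCoalgHom k H)) (u ⊗ₜ v))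

theorem stmt5 {k H Q : Type*} [Field k]
    [Ring H] [HopfAlgebra k H]
    [Ring Q] [HopfAlgebra k Q]
    (π : H →ₐc[k] Q) (hπ : Function.Surjective π)
    (γ γinv : Q →ₗ[k] H)
    (hεγ : ∀ x : Q, Coalgebra.counit (R := k) (γ x) = Coalgebra.counit (R := k) x)
    (hπγ : ∀ x : Q, π (γ x) = x)
    (hcolin : ∀ x : Q,
      (TensorProduct.map γ LinearMap.id) (Coalgebra.comul (R := k) x) =
      (TensorProduct.map LinearMap.id π.toLinearMap) (Coalgebra.comul (R := k) (γ x)))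
    (hinv₁ : ∀ x : Q,
      LinearMap.mul' k H ((TensorProduct.map γ γinv) (Coalgebra.comul (R := k) x)) =
        (Coalgebra.counit (R := k) x) • (1 : H))
    (hinv₂ : ∀ x : Q,
      LinearMap.mul' k H ((TensorProduct.map γinv γ) (Coalgebra.comul (R := k) x)) =
        (Coalgebra.counit (R := k) x) • (1 : H))
    (η : H →ₗ[k] H)
    (hη : η = LinearMap.mul' k H ∘ₗ
      (TensorProduct.map LinearMap.id (γinv ∘ₗ π.toLinearMap)) ∘ₗ Coalgebra.comul) :
    ∀ u v : H,
      η (u * v) =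
        -- η(u₁) · γ(π(u₂))₁ · η(v₁) · S(γ(π(u₂))₂) · η(γ(π(u₂))₃ γ(π(v₂)))
        LinearMap.mul' k H
          ((TensorProduct.map (LinearMap.mul' k H)
              (LinearMap.mul' k H ∘ₗ TensorProduct.map LinearMap.id (LinearMap.mul' k H)))
            ((TensorProduct.tensorTensorTensorComm k H H H (H ⊗[k] H)).toLinearMap
              ((TensorProduct.map (TensorProduct.map η η)
                  -- (u₂ ⊗ v₂) ↦ γπ(u₂)₁ ⊗ (S(γπ(u₂))₂ ⊗ η(γπ(u₂)₃ · γπ(v₂)))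
                  ((TensorProduct.map LinearMap.id
                      (TensorProduct.map (HopfAlgebra.antipode (R := k))
                        (η ∘ₗ LinearMap.mul' k H))) ∘ₗ
                    (TensorProduct.map LinearMap.id
                      (TensorProduct.assoc k H H H).toLinearMap) ∘ₗ
                    (TensorProduct.assoc k H (H ⊗[k] H) H).toLinearMap ∘ₗ
                    (TensorProduct.map
                      ((TensorProduct.map LinearMap.id (Coalgebra.comul (R := k))) ∘ₗ
                        Coalgebra.comul (R := k) ∘ₗ γ ∘ₗ π.toLinearMap)
                      (γ ∘ₗ π.toLinearMap))))
                ((TensorProduct.tensorTensorTensorComm k H H H H).toLinearMap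
                  ((Coalgebra.comul (R := k) u) ⊗ₜ[k] (Coalgebra.comul (R := k) v)))))) :=
  stmt5_general π γ γinv hcolin hinv₂ η hη
end

section
/- For a field k of characteristic p > 0 and r ≥ 1, the map F_r : k[X_0,…,X_{r−1}]/(X_0^p,…,X_{r−1}^p) → k[G_{a,r}] sending X_i ↦ δ_{p^i} is an algebra isomorphism, with inverse sending δ_n ↦ (1/(a_0!⋯a_{r−1}!)) X_0^{a_0}⋯X_{r−1}^{a_{r−1}} where n = a_0 + a_1 p + ⋯ + a_{r−1} p^{r−1} is the p-adic expansion of n. -/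
/-!
By Lucas's theorem, `C(i p^j, p^j) ≡ i` and `C(m + c p^s, m) ≡ 1` modulo `p` when `m < p^s`.
The first gives `δ_{p^j}^a = a! δ_{a p^j}`, in particular `δ_{p^j}^p = 0`, so `X_j ↦ δ_{p^j}`
descends to the truncated polynomial algebra; the second gives
`∏ δ_{p^j}^{a_j} = (∏ a_j!) δ_{∑ a_j p^j}` for digits `a_j < p`, so the divided monomial
`X^a / a!` is sent to `δ_n`. The linear map `δ_n ↦ X^a / a!` is then a two-sided inverse,
because every monomial with an exponent `≥ p` already vanishes in the quotient.
-/

open MvPolynomial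
open scoped Nat

namespace Nat

theorem choose_mul_prime_pow_modEq {p : ℕ} [Fact p.Prime] (i j : ℕ) :
    (i * p ^ j).choose (p ^ j) ≡ i [MOD p] := by
  induction j with
  | zero => simpa using Nat.ModEq.refl i
  | succ j ih =>
    calc (i * p ^ (j + 1)).choose (p ^ (j + 1))
        = (p * (i * p ^ j)).choose (p * p ^ j) := by rw [pow_succ', mul_left_comm]
      _ ≡ (i * p ^ j).choose (p ^ j) [MOD p] := Choose.choose_mul_mul_modEq_choose_nat
      _ ≡ i [MOD p] := ih

theorem choose_add_mul_prime_pow_modEq_one {p : ℕ} [hp : Fact p.Prime] {s m : ℕ}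
    (hm : m < p ^ s) (c : ℕ) : (m + c * p ^ s).choose m ≡ 1 [MOD p] := by
  induction s generalizing m with
  | zero =>
    obtain rfl : m = 0 := by simpa using hm
    simp [Nat.ModEq.refl]
  | succ s ih =>
    have hmod : (m + c * p ^ (s + 1)) % p = m % p := by
      rw [pow_succ, ← mul_assoc, Nat.add_mul_mod_self_right]
    have hdiv : (m + c * p ^ (s + 1)) / p = m / p + c * p ^ s := by
      rw [pow_succ, ← mul_assoc, Nat.add_mul_div_right _ _ hp.out.pos]
    have hlt : m / p < p ^ s := Nat.div_lt_of_lt_mul (by rwa [← pow_succ'])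
    have h := Choose.choose_modEq_choose_mod_mul_choose_div_nat (p := p)
      (n := m + c * p ^ (s + 1)) (k := m)
    rw [hmod, hdiv, Nat.choose_self, one_mul] at h
    exact h.trans (ih hlt)

theorem sum_div_pow_mod_mul_pow {p r n : ℕ} (hn : n < p ^ r) :
    ∑ j : Fin r, n / p ^ (j : ℕ) % p * p ^ (j : ℕ) = n := by
  have h := congrArg Fin.val (finFunctionFinEquiv.apply_symm_apply (⟨n, hn⟩ : Fin (p ^ r)))
  rwa [finFunctionFinEquiv_apply] at h

theorem sum_mul_pow_lt {p r : ℕ} {a : Fin r → ℕ} (ha : ∀ j, a j < p) :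
    ∑ j : Fin r, a j * p ^ (j : ℕ) < p ^ r :=
  (finFunctionFinEquiv fun j => (⟨a j, ha j⟩ : Fin p)).isLt

theorem sum_mul_pow_div_pow_mod {p r : ℕ} {a : Fin r → ℕ} (ha : ∀ j, a j < p) (i : Fin r) :
    (∑ j : Fin r, a j * p ^ (j : ℕ)) / p ^ (i : ℕ) % p = a i := by
  have h := congrArg (fun f => (f i : ℕ))
    (finFunctionFinEquiv.symm_apply_apply fun j => (⟨a j, ha j⟩ : Fin p))
  rwa [finFunctionFinEquiv_symm_apply_val, finFunctionFinEquiv_apply] at h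

end Nat

namespace MvPolynomial

noncomputable abbrev xPowIdeal (σ k : Type*) [CommRing k] (p : ℕ) : Ideal (MvPolynomial σ k) :=
  Ideal.span (Set.range fun i : σ => X i ^ p)

variable {σ k : Type*}

section CommRing

variable [CommRing k] {p : ℕ}

theorem monomial_mem_xPowIdeal {s : σ →₀ ℕ} {i : σ} (h : p ≤ s i) (c : k) :
    monomial s c ∈ xPowIdeal σ k p := by
  have hs : monomial s c = X i ^ p * monomial (s - Finsupp.single i p) c := by
    rw [X_pow_eq_monomial, monomial_mul, one_mul,
      add_tsub_cancel_of_le (Finsupp.single_le_iff.mpr h)]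
  rw [hs]
  exact Ideal.mul_mem_right _ _ (Ideal.subset_span ⟨i, rfl⟩)

variable {D : Type*} [CommRing D] [Algebra k D]

noncomputable def liftXPow (g : σ → D) (hg : ∀ i, g i ^ p = 0) :
    (MvPolynomial σ k ⧸ xPowIdeal σ k p) →ₐ[k] D :=
  Ideal.Quotient.liftₐ _ (aeval g) fun _ hx =>
    (Ideal.span_le (I := RingHom.ker (aeval g).toRingHom)).mpr
      (by rintro _ ⟨i, rfl⟩; simp [hg]) hx

@[simp]
theorem liftXPow_mk (g : σ → D) (hg : ∀ i, g i ^ p = 0) (x : MvPolynomial σ k) :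
    liftXPow g hg (Ideal.Quotient.mk _ x) = aeval g x :=
  rfl

end CommRing

section Field

variable [Field k] [Fintype σ]

noncomputable def dividedMonomial (a : σ → ℕ) : MvPolynomial σ k :=
  C (∏ j, ((a j)! : k))⁻¹ * ∏ j, X j ^ a j

theorem C_prod_factorial_mul_dividedMonomial {a : σ → ℕ} (ha : ∏ j, ((a j)! : k) ≠ 0) :
    C (∏ j, ((a j)! : k)) * dividedMonomial a = ∏ j, X j ^ a j := by
  rw [dividedMonomial, ← mul_assoc, ← map_mul, mul_inv_cancel₀ ha, map_one, one_mul]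

end Field

end MvPolynomial

section DeltaPowers

variable {k D : Type*} [CommRing k] [CommRing D] [Algebra k D] {δ : ℕ → D}

theorem pow_delta_prime_pow (p : ℕ) [Fact p.Prime] [CharP k p]
    (hmul : ∀ m n : ℕ, δ m * δ n = (((m + n).choose m : ℕ) : k) • δ (m + n))
    (hone : (1 : D) = δ 0) (j a : ℕ) : δ (p ^ j) ^ a = (a ! : k) • δ (a * p ^ j) := by
  induction a with
  | zero => simpa using hone
  | succ a ih =>
    have hfac : ((a ! * ((a + 1) * p ^ j).choose (p ^ j) : ℕ) : k) = ((a + 1)! : k) :=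
      CharP.natCast_eq_natCast' k p <| by
        simpa [Nat.factorial_succ, mul_comm] using
          (Nat.choose_mul_prime_pow_modEq (p := p) (a + 1) j).mul_left a !
    rw [pow_succ, ih, smul_mul_assoc, hmul, smul_smul, Nat.choose_symm_add, ← Nat.cast_mul,
      ← Nat.succ_mul, hfac]

theorem pow_delta_prime_pow_prime (p : ℕ) [hp : Fact p.Prime] [CharP k p]
    (hmul : ∀ m n : ℕ, δ m * δ n = (((m + n).choose m : ℕ) : k) • δ (m + n))
    (hone : (1 : D) = δ 0) (j : ℕ) : δ (p ^ j) ^ p = 0 := by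
  rw [pow_delta_prime_pow p hmul hone,
    (CharP.cast_eq_zero_iff k p _).mpr (Nat.dvd_factorial hp.out.pos le_rfl), zero_smul]

theorem prod_pow_delta_prime_pow (p : ℕ) [Fact p.Prime] [CharP k p]
    (hmul : ∀ m n : ℕ, δ m * δ n = (((m + n).choose m : ℕ) : k) • δ (m + n))
    (hone : (1 : D) = δ 0) {r : ℕ} (a : Fin r → ℕ) (ha : ∀ j, a j < p) :
    ∏ j : Fin r, δ (p ^ (j : ℕ)) ^ a j =
      (∏ j, ((a j)! : k)) • δ (∑ j, a j * p ^ (j : ℕ)) := by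
  induction r with
  | zero => simpa using hone
  | succ r ih =>
    set m := ∑ j : Fin r, a j.castSucc * p ^ (j : ℕ)
    have hm : m < p ^ r := Nat.sum_mul_pow_lt fun _ => ha _
    have hc : (((m + a (Fin.last r) * p ^ r).choose m : ℕ) : k) = 1 := by
      simpa using CharP.natCast_eq_natCast' k p (Nat.choose_add_mul_prime_pow_modEq_one hm _)
    simp only [Fin.prod_univ_castSucc, Fin.sum_univ_castSucc, Fin.val_castSucc, Fin.val_last]
    rw [ih _ fun j => ha _, pow_delta_prime_pow p hmul hone, smul_mul_smul_comm, hmul, hc,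
      smul_smul, mul_one]

end DeltaPowers

section Isomorphism

variable {k D : Type*} [Field k] [CommRing D] [Algebra k D] {δ : ℕ → D}

theorem prod_factorial_ne_zero {p : ℕ} [CharP k p] [hp : Fact p.Prime] {ι : Type*} [Fintype ι]
    {a : ι → ℕ} (ha : ∀ j, a j < p) : ∏ j, ((a j)! : k) ≠ 0 :=
  Finset.prod_ne_zero_iff.mpr fun j _ => by
    rw [Ne, CharP.cast_eq_zero_iff k p, hp.out.dvd_factorial]
    exact not_le.mpr (ha j)

noncomputable def deltaAlgHom (p r : ℕ) [Fact p.Prime] [CharP k p]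
    (hmul : ∀ m n : ℕ, δ m * δ n = (((m + n).choose m : ℕ) : k) • δ (m + n))
    (hone : (1 : D) = δ 0) : (MvPolynomial (Fin r) k ⧸ xPowIdeal (Fin r) k p) →ₐ[k] D :=
  liftXPow (fun i : Fin r => δ (p ^ (i : ℕ))) fun i => pow_delta_prime_pow_prime p hmul hone i

theorem deltaAlgHom_mk_dividedMonomial {p r : ℕ} [Fact p.Prime] [CharP k p]
    (hmul : ∀ m n : ℕ, δ m * δ n = (((m + n).choose m : ℕ) : k) • δ (m + n))
    (hone : (1 : D) = δ 0) {a : Fin r → ℕ} (ha : ∀ j, a j < p) :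
    deltaAlgHom p r hmul hone (Ideal.Quotient.mk _ (dividedMonomial a)) =
      δ (∑ j, a j * p ^ (j : ℕ)) := by
  simp only [deltaAlgHom, liftXPow_mk, dividedMonomial, map_mul, aeval_C, map_prod, map_pow,
    aeval_X]
  rw [prod_pow_delta_prime_pow p hmul hone a ha, ← Algebra.smul_def, smul_smul,
    inv_mul_cancel₀ (prod_factorial_ne_zero ha), one_smul]

noncomputable def deltaInverse (p : ℕ) {r : ℕ} (b : Module.Basis (Fin (p ^ r)) k D) :
    D →ₗ[k] MvPolynomial (Fin r) k ⧸ xPowIdeal (Fin r) k p :=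
  b.constr k fun n => Ideal.Quotient.mk _ (dividedMonomial fun j : Fin r => n / p ^ (j : ℕ) % p)

theorem deltaInverse_delta {p r : ℕ} {b : Module.Basis (Fin (p ^ r)) k D}
    (hb : ∀ i, b i = δ i) {n : ℕ} (hn : n < p ^ r) :
    deltaInverse p b (δ n) =
      Ideal.Quotient.mk _ (dividedMonomial fun j : Fin r => n / p ^ (j : ℕ) % p) := by
  rw [← hb ⟨n, hn⟩]
  exact b.constr_basis k _ _

theorem deltaAlgHom_deltaInverse {p r : ℕ} [hp : Fact p.Prime] [CharP k p]
    (hmul : ∀ m n : ℕ, δ m * δ n = (((m + n).choose m : ℕ) : k) • δ (m + n))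
    (hone : (1 : D) = δ 0) {b : Module.Basis (Fin (p ^ r)) k D} (hb : ∀ i, b i = δ i) (d : D) :
    deltaAlgHom p r hmul hone (deltaInverse p b d) = d := by
  suffices (deltaAlgHom p r hmul hone).toLinearMap ∘ₗ deltaInverse p b = LinearMap.id from
    LinearMap.congr_fun this d
  refine b.ext fun i => ?_
  rw [LinearMap.comp_apply, AlgHom.toLinearMap_apply, LinearMap.id_apply, hb i,
    deltaInverse_delta hb i.isLt,
    deltaAlgHom_mk_dividedMonomial hmul hone fun _ => Nat.mod_lt _ hp.out.pos,
    Nat.sum_div_pow_mod_mul_pow i.isLt]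

theorem deltaInverse_deltaAlgHom {p r : ℕ} [Fact p.Prime] [CharP k p]
    (hmul : ∀ m n : ℕ, δ m * δ n = (((m + n).choose m : ℕ) : k) • δ (m + n))
    (hone : (1 : D) = δ 0) {b : Module.Basis (Fin (p ^ r)) k D} (hb : ∀ i, b i = δ i)
    (x : MvPolynomial (Fin r) k ⧸ xPowIdeal (Fin r) k p) :
    deltaInverse p b (deltaAlgHom p r hmul hone x) = x := by
  obtain ⟨x, rfl⟩ := Ideal.Quotient.mk_surjective x
  suffices (deltaInverse p b ∘ₗ (deltaAlgHom p r hmul hone).toLinearMap) ∘ₗ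
      (Ideal.Quotient.mkₐ k _).toLinearMap = (Ideal.Quotient.mkₐ k _).toLinearMap from
    LinearMap.congr_fun this x
  refine (basisMonomials (Fin r) k).ext fun s => ?_
  simp only [coe_basisMonomials, LinearMap.comp_apply, AlgHom.toLinearMap_apply]
  by_cases hs : ∀ j, s j < p
  · have hmon : monomial s (1 : k) = C (∏ j, ((s j)! : k)) * dividedMonomial (fun j => s j) := by
      rw [C_prod_factorial_mul_dividedMonomial (prod_factorial_ne_zero hs), monomial_eq, map_one,
        one_mul, Finsupp.prod_fintype _ _ fun _ => pow_zero _]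
    have hdigits :
        (fun j : Fin r => (∑ i, s i * p ^ (i : ℕ)) / p ^ (j : ℕ) % p) = fun j => s j :=
      funext (Nat.sum_mul_pow_div_pow_mod hs)
    rw [hmon, ← smul_eq_C_mul, map_smul, map_smul, map_smul, Ideal.Quotient.mkₐ_eq_mk,
      deltaAlgHom_mk_dividedMonomial hmul hone hs,
      deltaInverse_delta hb (Nat.sum_mul_pow_lt hs), hdigits]
  · obtain ⟨j, hj⟩ := not_forall.mp hs
    rw [Ideal.Quotient.mkₐ_eq_mk,
      Ideal.Quotient.eq_zero_iff_mem.mpr (monomial_mem_xPowIdeal (not_lt.mp hj) 1), map_zero,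
      map_zero]

end Isomorphism

theorem stmt9_general {k : Type*} [Field k] {p : ℕ} (hp : p.Prime) [CharP k p] (r : ℕ)
    -- D = k[G_{a,r}], presented by structure constants on the basis {δ_n}
    {D : Type*} [CommRing D] [Algebra k D]
    (δ : ℕ → D)
    (hmul : ∀ m n : ℕ, δ m * δ n = (((m + n).choose m : ℕ) : k) • δ (m + n))
    (hone : (1 : D) = δ 0)
    (bD : Module.Basis (Fin (p ^ r)) k D) (hbD : ∀ i : Fin (p ^ r), bD i = δ (i : ℕ)) :
    ∃ F : (MvPolynomial (Fin r) k ⧸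
            Ideal.span (Set.range fun i : Fin r => (MvPolynomial.X i : MvPolynomial (Fin r) k) ^ p))
          ≃ₐ[k] D,
      (∀ i : Fin r,
        F (Ideal.Quotient.mk _ (MvPolynomial.X i)) = δ (p ^ (i : ℕ))) ∧
      (∀ n : ℕ, n < p ^ r →
        F.symm (δ n) =
          Ideal.Quotient.mk _
            (MvPolynomial.C ((∏ j : Fin r, ((n / p ^ (j : ℕ) % p).factorial : k))⁻¹) *
              ∏ j : Fin r, (MvPolynomial.X j : MvPolynomial (Fin r) k) ^ (n / p ^ (j : ℕ) % p))) := by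
  have := Fact.mk hp
  let F := AlgEquiv.ofBijective (deltaAlgHom p r hmul hone)
    ⟨Function.LeftInverse.injective (deltaInverse_deltaAlgHom hmul hone hbD),
      Function.RightInverse.surjective (deltaAlgHom_deltaInverse hmul hone hbD)⟩
  refine ⟨F, fun i => aeval_X _ i, fun n hn => F.symm_apply_eq.mpr ?_⟩
  have hδ := deltaAlgHom_deltaInverse hmul hone hbD (δ n)
  rw [deltaInverse_delta hbD hn] at hδ
  exact hδ.symm

theorem stmt9 {k : Type*} [Field k] {p : ℕ} (hp : p.Prime) [CharP k p] (r : ℕ) (hr : 1 ≤ r)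
    -- D = k[G_{a,r}], presented by structure constants on the basis {δ_n}
    {D : Type*} [CommRing D] [Algebra k D]
    (δ : ℕ → D)
    (hmul : ∀ m n : ℕ, δ m * δ n = (((m + n).choose m : ℕ) : k) • δ (m + n))
    (hzero : ∀ n, p ^ r ≤ n → δ n = 0)
    (hone : (1 : D) = δ 0)
    (bD : Module.Basis (Fin (p ^ r)) k D) (hbD : ∀ i : Fin (p ^ r), bD i = δ (i : ℕ)) :
    ∃ F : (MvPolynomial (Fin r) k ⧸
            Ideal.span (Set.range fun i : Fin r => (MvPolynomial.X i : MvPolynomial (Fin r) k) ^ p))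
          ≃ₐ[k] D,
      (∀ i : Fin r,
        F (Ideal.Quotient.mk _ (MvPolynomial.X i)) = δ (p ^ (i : ℕ))) ∧
      (∀ n : ℕ, n < p ^ r →
        F.symm (δ n) =
          Ideal.Quotient.mk _
            (MvPolynomial.C ((∏ j : Fin r, ((n / p ^ (j : ℕ) % p).factorial : k))⁻¹) *
              ∏ j : Fin r, (MvPolynomial.X j : MvPolynomial (Fin r) k) ^ (n / p ^ (j : ℕ) % p))) :=
  stmt9_general hp r δ hmul hone bD hbD
end

section
/- Let k have characteristic p > 0 and consider k[G_{a,2}] = (k[t]/(t^{p²}))* with basis {δ_n : 0 ≤ n < p²}. The linear map π : k[G_{a,2}] → k[G_{a,1}] given by π(δ_n) = δ_{n/p} if p | n and π(δ_n) = 0 otherwise is a surjective algebra map whose kernel equals k[G_{a,1}]⁺ k[G_{a,2}] = span{δ_n : p ∤ n}, where k[G_{a,1}] ⊂ k[G_{a,2}] is the span of {δ_0,…,δ_{p−1}} and k[G_{a,1}]⁺ = span{δ_1,…,δ_{p−1}}. -/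
/-!
By Lucas' theorem, in characteristic `p` the coefficient `C(m + n, m)` vanishes when `p ∣ m + n`
but `p ∤ m`, and `C(p a + p b, p a) = C(a + b, a)`. The first fact makes `π` kill every product
involving a `δ_n` with `p ∤ n`, the second makes `π` multiplicative on `δ_{pa} δ_{pb}`.
Since `π` maps the basis vectors `δ_{pj}` bijectively onto the basis of `k[G_{a,1}]` and kills the
others, it is surjective with kernel spanned by the `δ_n` with `p ∤ n`. Finally
`δ_n = δ_{n mod p} δ_{p ⌊n/p⌋}`, again by Lucas.
-/

open Set Submodule

section Lucas

variable {R : Type*} [Semiring R] {p : ℕ} [Fact p.Prime] [CharP R p]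

theorem cast_choose_eq_mul_cast_choose_mod_div (n m : ℕ) :
    (n.choose m : R) = ((n % p).choose (m % p) : R) * ((n / p).choose (m / p) : R) := by
  rw [← Nat.cast_mul]
  exact CharP.natCast_eq_natCast' R p Choose.choose_modEq_choose_mod_mul_choose_div_nat

theorem cast_choose_eq_zero_of_dvd_add {m n : ℕ} (hmn : p ∣ m + n) (hm : ¬ p ∣ m) :
    ((m + n).choose m : R) = 0 := by
  have hm_mod : 0 < m % p := Nat.pos_of_ne_zero (mt Nat.dvd_of_mod_eq_zero hm)
  rw [cast_choose_eq_mul_cast_choose_mod_div (p := p), Nat.mod_eq_zero_of_dvd hmn,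
    Nat.choose_eq_zero_of_lt hm_mod, Nat.cast_zero, zero_mul]

theorem cast_choose_mul_add_mul (a b : ℕ) :
    ((p * a + p * b).choose (p * a) : R) = ((a + b).choose a : R) := by
  have hp : 0 < p := (Fact.out : p.Prime).pos
  rw [cast_choose_eq_mul_cast_choose_mod_div (p := p), ← mul_add, Nat.mul_mod_right,
    Nat.mul_mod_right, Nat.mul_div_cancel_left _ hp, Nat.mul_div_cancel_left _ hp,
    Nat.choose_self, Nat.cast_one, one_mul]

theorem cast_choose_mod_eq_one (n : ℕ) : (n.choose (n % p) : R) = 1 := by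
  have hp : 0 < p := (Fact.out : p.Prime).pos
  rw [cast_choose_eq_mul_cast_choose_mod_div (p := p), Nat.mod_mod, Nat.choose_self,
    Nat.div_eq_of_lt (Nat.mod_lt n hp), Nat.choose_zero_right, Nat.cast_one, one_mul]

end Lucas

section BasisProjection

variable {R M N ι κ : Type*} [Semiring R] [AddCommMonoid M] [Module R M] [AddCommMonoid N]
  [Module R N] (b : Module.Basis ι R M) (c : Module.Basis κ R N) {f : M →ₗ[R] N} {e : κ → ι}

theorem Module.Basis.repr_map_of_map_basis (he : Function.Injective e)
    (hfe : ∀ j, f (b (e j)) = c j) (hf0 : ∀ i ∉ range e, f (b i) = 0) (x : M) (j : κ) :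
    c.repr (f x) j = b.repr x (e j) := by
  suffices (c.coord j).comp f = b.coord (e j) from LinearMap.congr_fun this x
  refine b.ext fun i => ?_
  by_cases hi : i ∈ range e
  · obtain ⟨j', rfl⟩ := hi
    simp [hfe, Finsupp.single_apply_left he]
  · have hne : i ≠ e j := fun h => hi ⟨j, h.symm⟩
    simp [hf0 i hi, hne]

theorem Module.Basis.surjective_of_map_basis (hfe : ∀ j, f (b (e j)) = c j) :
    Function.Surjective f := by
  rw [← LinearMap.range_eq_top, eq_top_iff, ← c.span_eq, span_le]
  rintro _ ⟨j, rfl⟩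
  exact ⟨b (e j), hfe j⟩

theorem Module.Basis.ker_eq_span_image_compl_range (he : Function.Injective e)
    (hfe : ∀ j, f (b (e j)) = c j) (hf0 : ∀ i ∉ range e, f (b i) = 0) :
    LinearMap.ker f = span R (b '' (range e)ᶜ) := by
  ext x
  rw [LinearMap.mem_ker, b.mem_span_image, ← c.repr.map_eq_zero_iff, Finsupp.ext_iff]
  simp only [b.repr_map_of_map_basis c he hfe hf0, Finsupp.coe_zero, Pi.zero_apply]
  constructor
  · rintro h i hi ⟨j, rfl⟩
    exact (Finsupp.mem_support_iff.mp hi) (h j)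
  · intro h j
    by_contra hj
    exact h (Finsupp.mem_support_iff.mpr hj) ⟨j, rfl⟩

end BasisProjection

theorem Module.Basis.map_mul_of_map_mul_basis {R A B ι : Type*} [CommSemiring R] [Semiring A]
    [Algebra R A] [Semiring B] [Algebra R B] (b : Module.Basis ι R A) (f : A →ₗ[R] B)
    (h : ∀ i j, f (b i * b j) = f (b i) * f (b j)) (x y : A) : f (x * y) = f x * f y := by
  have : (LinearMap.mul R A).compr₂ f = (LinearMap.mul R B).compl₁₂ f f :=
    b.ext fun i => b.ext fun j => h i j
  exact LinearMap.congr_fun₂ this x y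

section DividedPowerBasis

variable {k A A₁ : Type*} [CommSemiring k] [Semiring A] [Algebra k A] [Semiring A₁]
  [Algebra k A₁] {p : ℕ} [Fact p.Prime] [CharP k p] {δ : ℕ → A}
  (hmul : ∀ m n : ℕ, δ m * δ n = (((m + n).choose m : ℕ) : k) • δ (m + n))
include hmul

theorem delta_mod_mul_delta_div (n : ℕ) : δ (n % p) * δ (p * (n / p)) = δ n := by
  rw [hmul, Nat.mod_add_div, cast_choose_mod_eq_one, one_smul]

theorem delta_mul_mem_span_not_dvd {N : ℕ} (hzero : ∀ n, N ≤ n → δ n = 0) {i : ℕ}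
    (hi : ¬ p ∣ i) (j : ℕ) :
    δ i * δ j ∈ span k {x : A | ∃ n, n < N ∧ ¬ p ∣ n ∧ x = δ n} := by
  rw [hmul]
  by_cases hN : N ≤ i + j
  · rw [hzero _ hN, smul_zero]
    exact zero_mem _
  by_cases hd : p ∣ i + j
  · rw [cast_choose_eq_zero_of_dvd_add hd hi, zero_smul]
    exact zero_mem _
  · exact smul_mem _ _ (subset_span ⟨i + j, Nat.lt_of_not_le hN, hd, rfl⟩)

theorem span_delta_not_dvd_eq_span_delta_mul {N : ℕ} (hzero : ∀ n, N ≤ n → δ n = 0)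
    (hspan : span k (range δ) = ⊤) :
    span k {x : A | ∃ n, n < N ∧ ¬ p ∣ n ∧ x = δ n} =
      span k {y : A | ∃ i, 0 < i ∧ i < p ∧ ∃ x : A, y = δ i * x} := by
  have hp : 0 < p := (Fact.out : p.Prime).pos
  apply le_antisymm
  · rw [span_le]
    rintro _ ⟨n, -, hn, rfl⟩
    have hn_mod : 0 < n % p := Nat.pos_of_ne_zero (mt Nat.dvd_of_mod_eq_zero hn)
    exact subset_span ⟨n % p, hn_mod, Nat.mod_lt n hp, _,
      (delta_mod_mul_delta_div hmul n).symm⟩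
  · rw [span_le]
    rintro _ ⟨i, hi0, hip, x, rfl⟩
    have hle : span k (range δ) ≤
        (span k {x : A | ∃ n, n < N ∧ ¬ p ∣ n ∧ x = δ n}).comap (LinearMap.mulLeft k (δ i)) := by
      rw [span_le]
      rintro _ ⟨j, rfl⟩
      exact delta_mul_mem_span_not_dvd hmul hzero (Nat.not_dvd_of_pos_of_lt hi0 hip) j
    rw [hspan] at hle
    exact hle trivial

theorem map_delta_mul {δ' : ℕ → A₁}
    (hmul' : ∀ m n : ℕ, δ' m * δ' n = (((m + n).choose m : ℕ) : k) • δ' (m + n))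
    {π : A →ₗ[k] A₁} (hπ : ∀ n, π (δ n) = if p ∣ n then δ' (n / p) else 0) (m n : ℕ) :
    π (δ m * δ n) = π (δ m) * π (δ n) := by
  have hp : 0 < p := (Fact.out : p.Prime).pos
  rw [hmul, map_smul]
  by_cases hm : p ∣ m
  · by_cases hn : p ∣ n
    · obtain ⟨a, rfl⟩ := hm
      obtain ⟨b, rfl⟩ := hn
      rw [hπ, hπ, hπ, if_pos (dvd_mul_right p a), if_pos (dvd_mul_right p b),
        if_pos (dvd_add (dvd_mul_right p a) (dvd_mul_right p b)), ← mul_add,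
        Nat.mul_div_cancel_left _ hp, Nat.mul_div_cancel_left _ hp,
        Nat.mul_div_cancel_left _ hp, mul_add, cast_choose_mul_add_mul, hmul']
    · rw [hπ, hπ n, if_neg hn, if_neg ((Nat.dvd_add_right hm).not.mpr hn), smul_zero,
        mul_zero]
  · rw [hπ, hπ m, if_neg hm, zero_mul]
    split_ifs with hmn
    · rw [cast_choose_eq_zero_of_dvd_add hmn hm, zero_smul]
    · rw [smul_zero]

end DividedPowerBasis

def Fin.mulLeftSq (p : ℕ) (j : Fin p) : Fin (p ^ 2) :=
  ⟨p * j, by rw [sq]; exact Nat.mul_lt_mul_of_pos_left j.isLt (Nat.zero_lt_of_lt j.isLt)⟩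

theorem Fin.mulLeftSq_injective (p : ℕ) : Function.Injective (Fin.mulLeftSq p) := fun a _ hab =>
  Fin.ext (Nat.eq_of_mul_eq_mul_left (Nat.zero_lt_of_lt a.isLt) (congrArg Fin.val hab))

theorem Fin.mem_range_mulLeftSq {p : ℕ} {i : Fin (p ^ 2)} :
    i ∈ range (Fin.mulLeftSq p) ↔ p ∣ (i : ℕ) := by
  constructor
  · rintro ⟨j, rfl⟩
    exact dvd_mul_right p j
  · rintro ⟨a, ha⟩
    have hap : a < p := by
      have hi := i.isLt
      rw [ha, sq] at hi
      exact Nat.lt_of_mul_lt_mul_left hi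
    exact ⟨⟨a, hap⟩, Fin.ext ha.symm⟩

theorem image_compl_range_mulLeftSq {A : Type*} {p : ℕ} (δ : ℕ → A) :
    (fun i : Fin (p ^ 2) => δ i) '' (range (Fin.mulLeftSq p))ᶜ =
      {x : A | ∃ n, n < p ^ 2 ∧ ¬ p ∣ n ∧ x = δ n} := by
  ext x
  simp only [mem_ofPred_eq, mem_image, mem_compl_iff, Fin.mem_range_mulLeftSq]
  constructor
  · rintro ⟨i, hpi, rfl⟩
    exact ⟨i, i.isLt, hpi, rfl⟩
  · rintro ⟨n, hn, hpn, rfl⟩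
    exact ⟨⟨n, hn⟩, hpn, rfl⟩

theorem stmt11_general {k : Type*} [Field k] {p : ℕ} (hp : p.Prime) [CharP k p]
    -- A = k[G_{a,2}], presented by structure constants on the basis {δ_n : n < p²}
    {A : Type*} [CommRing A] [Algebra k A]
    (δ : ℕ → A)
    (hmul : ∀ m n : ℕ, δ m * δ n = (((m + n).choose m : ℕ) : k) • δ (m + n))
    (hzero : ∀ n, p ^ 2 ≤ n → δ n = 0)
    (bA : Module.Basis (Fin (p ^ 2)) k A) (hbA : ∀ i : Fin (p ^ 2), bA i = δ (i : ℕ))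
    -- A1 = k[G_{a,1}]
    {A1 : Type*} [CommRing A1] [Algebra k A1]
    (δ' : ℕ → A1)
    (hmul' : ∀ m n : ℕ, δ' m * δ' n = (((m + n).choose m : ℕ) : k) • δ' (m + n))
    (hzero' : ∀ n, p ≤ n → δ' n = 0)
    (bA1 : Module.Basis (Fin p) k A1) (hbA1 : ∀ i : Fin p, bA1 i = δ' (i : ℕ))
    -- π
    (π : A →ₗ[k] A1)
    (hπ : ∀ n, n < p ^ 2 → π (δ n) = if p ∣ n then δ' (n / p) else 0) :
    Function.Surjective π ∧
    (∀ x y : A, π (x * y) = π x * π y) ∧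
    LinearMap.ker π =
      Submodule.span k {x : A | ∃ n, n < p ^ 2 ∧ ¬ p ∣ n ∧ x = δ n} ∧
    Submodule.span k {x : A | ∃ n, n < p ^ 2 ∧ ¬ p ∣ n ∧ x = δ n} =
      Submodule.span k {y : A | ∃ i, 0 < i ∧ i < p ∧ ∃ x : A, y = δ i * x} := by
  have := Fact.mk hp
  have hπδ : ∀ n, π (δ n) = if p ∣ n then δ' (n / p) else 0 := by
    intro n
    rcases lt_or_ge n (p ^ 2) with hn | hn
    · exact hπ n hn
    · rw [hzero n hn, map_zero, hzero' (n / p) ((Nat.le_div_iff_mul_le hp.pos).mpr (sq p ▸ hn)),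
        ite_self]
  have hπe : ∀ j, π (bA (Fin.mulLeftSq p j)) = bA1 j := fun j => by
    rw [hbA, hbA1, hπδ, Fin.mulLeftSq, if_pos (dvd_mul_right p j),
      Nat.mul_div_cancel_left _ hp.pos]
  have hπ0 : ∀ i ∉ range (Fin.mulLeftSq p), π (bA i) = 0 := fun i hi => by
    rw [hbA, hπδ, if_neg (mt Fin.mem_range_mulLeftSq.mpr hi)]
  have hspan : span k (range δ) = ⊤ :=
    top_le_iff.mp (bA.span_eq ▸ span_mono (by rintro _ ⟨i, rfl⟩; exact ⟨i, (hbA i).symm⟩))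
  refine ⟨bA.surjective_of_map_basis bA1 hπe,
    bA.map_mul_of_map_mul_basis π fun i j => by
      simp only [hbA]
      exact map_delta_mul hmul hmul' hπδ _ _,
    by rw [bA.ker_eq_span_image_compl_range bA1 (Fin.mulLeftSq_injective p) hπe hπ0,
      ← image_compl_range_mulLeftSq, funext hbA],
    span_delta_not_dvd_eq_span_delta_mul hmul hzero hspan⟩

theorem stmt11 {k : Type*} [Field k] {p : ℕ} (hp : p.Prime) [CharP k p]
    -- A = k[G_{a,2}], presented by structure constants on the basis {δ_n : n < p²}
    {A : Type*} [CommRing A] [Algebra k A]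
    (δ : ℕ → A)
    (hmul : ∀ m n : ℕ, δ m * δ n = (((m + n).choose m : ℕ) : k) • δ (m + n))
    (hzero : ∀ n, p ^ 2 ≤ n → δ n = 0)
    (hone : (1 : A) = δ 0)
    (bA : Module.Basis (Fin (p ^ 2)) k A) (hbA : ∀ i : Fin (p ^ 2), bA i = δ (i : ℕ))
    -- A1 = k[G_{a,1}]
    {A1 : Type*} [CommRing A1] [Algebra k A1]
    (δ' : ℕ → A1)
    (hmul' : ∀ m n : ℕ, δ' m * δ' n = (((m + n).choose m : ℕ) : k) • δ' (m + n))
    (hzero' : ∀ n, p ≤ n → δ' n = 0)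
    (hone' : (1 : A1) = δ' 0)
    (bA1 : Module.Basis (Fin p) k A1) (hbA1 : ∀ i : Fin p, bA1 i = δ' (i : ℕ))
    -- π
    (π : A →ₗ[k] A1)
    (hπ : ∀ n, n < p ^ 2 → π (δ n) = if p ∣ n then δ' (n / p) else 0) :
    Function.Surjective π ∧
    (∀ x y : A, π (x * y) = π x * π y) ∧
    LinearMap.ker π =
      Submodule.span k {x : A | ∃ n, n < p ^ 2 ∧ ¬ p ∣ n ∧ x = δ n} ∧
    Submodule.span k {x : A | ∃ n, n < p ^ 2 ∧ ¬ p ∣ n ∧ x = δ n} =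
      Submodule.span k {y : A | ∃ i, 0 < i ∧ i < p ∧ ∃ x : A, y = δ i * x} :=
  stmt11_general hp δ hmul hzero bA hbA δ' hmul' hzero' bA1 hbA1 π hπ
end

section
/- With π and γ as above for G = G_{a,2}, H = G_{a,1}, the map η := id ⋆ (γ⁻¹∘π) : k[G_{a,2}] → k[G_{a,2}] is the projection onto span{δ_0,…,δ_{p−1}} along span{δ_p,…,δ_{p²−1}}; that is, η(δ_n) = δ_n for 0 ≤ n < p and η(δ_n) = 0 for p ≤ n < p². -/
/-!
In `k[G_{a,2}]` we have `δ_a * δ_b = C(a+b, b) δ_{a+b}`, and `γ⁻¹ ∘ π` sends `δ_{pi}` to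
`(-1)^i δ_{pi}` and kills the other `δ_b`. Hence `η(δ_n) = c_n δ_n` with
`c_n = Σ_i (-1)^i C(n, p i)`. By Lucas' theorem `C(n, p i) ≡ C(n / p, i) mod p`, so `c_n` is the
alternating sum of the binomial coefficients `C(n / p, i)`, which is `1` if `n / p = 0` and `0`
otherwise.
-/

open Finset

theorem Finset.sum_range_succ_ite_dvd {M : Type*} [AddCommMonoid M] {p : ℕ} (hp : 0 < p)
    (f : ℕ → M) (n : ℕ) :
    ∑ b ∈ range (n + 1), (if p ∣ b then f b else 0) = ∑ i ∈ range (n / p + 1), f (p * i) := by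
  have himage : (range (n / p + 1)).image (p * ·) = (range (n + 1)).filter (p ∣ ·) := by
    ext b
    simp only [mem_image, mem_filter, mem_range]
    have hle (i : ℕ) : i < n / p + 1 ↔ p * i < n + 1 := by
      rw [Nat.lt_succ_iff, Nat.lt_succ_iff, Nat.le_div_iff_mul_le hp, mul_comm]
    constructor
    · rintro ⟨i, hi, rfl⟩
      exact ⟨(hle i).mp hi, dvd_mul_right p i⟩
    · rintro ⟨hb, i, rfl⟩
      exact ⟨i, (hle i).mpr hb, rfl⟩
  rw [← sum_filter, ← himage, sum_image fun i _ j _ h => Nat.eq_of_mul_eq_mul_left hp h]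

section CharP

variable {R : Type*} {p : ℕ}

theorem Nat.cast_choose_mul_eq_cast_choose_div [AddGroupWithOne R] [CharP R p] (hp : p.Prime)
    (n i : ℕ) : ((n.choose (p * i) : ℕ) : R) = ((n / p).choose i : R) := by
  have : Fact p.Prime := ⟨hp⟩
  have h := Choose.choose_modEq_choose_mod_mul_choose_div_nat (p := p) (n := n) (k := p * i)
  rw [Nat.mul_mod_right, Nat.choose_zero_right, Nat.mul_div_cancel_left _ hp.pos, one_mul] at h
  exact CharP.natCast_eq_natCast' R p h

theorem sum_antidiagonal_neg_one_pow_choose_dvd [Ring R] [CharP R p] (hp : p.Prime) (n : ℕ) :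
    ∑ ab ∈ antidiagonal n, (if p ∣ ab.2 then (-1 : R) ^ (ab.2 / p) * (n.choose ab.2 : R) else 0)
      = if n < p then 1 else 0 := by
  have halt := congrArg (Int.cast : ℤ → R) (Int.alternating_sum_range_choose (n := n / p))
  push_cast at halt
  rw [← Nat.sum_antidiagonal_swap]
  simp only [Prod.snd_swap]
  rw [Nat.sum_antidiagonal_eq_sum_range_succ fun b _ =>
      if p ∣ b then (-1 : R) ^ (b / p) * (n.choose b : R) else 0,
    Nat.succ_eq_add_one, sum_range_succ_ite_dvd hp.pos]
  simp only [Nat.mul_div_cancel_left _ hp.pos, Nat.cast_choose_mul_eq_cast_choose_div hp, halt,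
    Nat.div_eq_zero_iff_lt hp.pos]

end CharP

theorem delta_mul_gammaInv_pi_delta {k A A1 : Type*} [CommRing k] [CommRing A] [Algebra k A]
    [AddCommMonoid A1] [Module k A1] {p : ℕ} (hp : 0 < p) (δ : ℕ → A)
    (hmul : ∀ m n : ℕ, δ m * δ n = (((m + n).choose m : ℕ) : k) • δ (m + n))
    (δ' : ℕ → A1) (π : A →ₗ[k] A1)
    (hπ : ∀ n, n < p ^ 2 → π (δ n) = if p ∣ n then δ' (n / p) else 0)
    (γinv : A1 →ₗ[k] A) (hγinv : ∀ n, n < p → γinv (δ' n) = ((-1 : k) ^ n) • δ (p * n))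
    {a b : ℕ} (hb : b < p ^ 2) :
    δ a * γinv (π (δ b)) =
      (if p ∣ b then (-1 : k) ^ (b / p) * ((a + b).choose b : k) else 0) • δ (a + b) := by
  rw [hπ b hb]
  split_ifs with hdvd
  · have hbp : b / p < p := (Nat.div_lt_iff_lt_mul hp).mpr (by rwa [← sq])
    rw [hγinv _ hbp, Nat.mul_div_cancel' hdvd, mul_smul_comm, hmul, smul_smul, Nat.choose_symm_add]
  · rw [map_zero, mul_zero, zero_smul]

theorem stmt13_general {k : Type*} [Field k] {p : ℕ} (hp : p.Prime) [CharP k p]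
    -- A = k[G_{a,2}]
    {A : Type*} [CommRing A] [Algebra k A]
    (δ : ℕ → A)
    (hmul : ∀ m n : ℕ, δ m * δ n = (((m + n).choose m : ℕ) : k) • δ (m + n))
    -- A1 = k[G_{a,1}]
    {A1 : Type*} [CommRing A1] [Algebra k A1]
    (δ' : ℕ → A1)
    -- π, γ⁻¹
    (π : A →ₗ[k] A1)
    (hπ : ∀ n, n < p ^ 2 → π (δ n) = if p ∣ n then δ' (n / p) else 0)
    (γinv : A1 →ₗ[k] A)
    (hγinv : ∀ n, n < p → γinv (δ' n) = ((-1 : k) ^ n) • δ (p * n)) :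
    -- η(δ_n) = Σ_{a+b=n} δ_a · γ⁻¹(π(δ_b)) equals δ_n for n < p, and 0 for p ≤ n < p²
    ∀ n, n < p ^ 2 →
      (∑ ab ∈ Finset.HasAntidiagonal.antidiagonal n, δ ab.1 * γinv (π (δ ab.2))) =
        if n < p then δ n else 0 := by
  intro n hn
  have hterm : ∀ ab ∈ antidiagonal n, δ ab.1 * γinv (π (δ ab.2)) =
      (if p ∣ ab.2 then (-1 : k) ^ (ab.2 / p) * (n.choose ab.2 : k) else 0) • δ n := by
    rintro ⟨a, b⟩ hab
    rw [HasAntidiagonal.mem_antidiagonal] at hab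
    subst hab
    exact delta_mul_gammaInv_pi_delta hp.pos δ hmul δ' π hπ γinv hγinv (by omega)
  rw [sum_congr rfl hterm, ← sum_smul, sum_antidiagonal_neg_one_pow_choose_dvd hp, ite_smul,
    one_smul, zero_smul]

theorem stmt13 {k : Type*} [Field k] {p : ℕ} (hp : p.Prime) [CharP k p]
    -- A = k[G_{a,2}]
    {A : Type*} [CommRing A] [Algebra k A]
    (δ : ℕ → A)
    (hmul : ∀ m n : ℕ, δ m * δ n = (((m + n).choose m : ℕ) : k) • δ (m + n))
    (hzero : ∀ n, p ^ 2 ≤ n → δ n = 0)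
    (hone : (1 : A) = δ 0)
    (bA : Module.Basis (Fin (p ^ 2)) k A) (hbA : ∀ i : Fin (p ^ 2), bA i = δ (i : ℕ))
    -- A1 = k[G_{a,1}]
    {A1 : Type*} [CommRing A1] [Algebra k A1]
    (δ' : ℕ → A1)
    (hmul' : ∀ m n : ℕ, δ' m * δ' n = (((m + n).choose m : ℕ) : k) • δ' (m + n))
    (hzero' : ∀ n, p ≤ n → δ' n = 0)
    (hone' : (1 : A1) = δ' 0)
    (bA1 : Module.Basis (Fin p) k A1) (hbA1 : ∀ i : Fin p, bA1 i = δ' (i : ℕ))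
    -- π, γ⁻¹
    (π : A →ₗ[k] A1)
    (hπ : ∀ n, n < p ^ 2 → π (δ n) = if p ∣ n then δ' (n / p) else 0)
    (γinv : A1 →ₗ[k] A)
    (hγinv : ∀ n, n < p → γinv (δ' n) = ((-1 : k) ^ n) • δ (p * n)) :
    -- η(δ_n) = Σ_{a+b=n} δ_a · γ⁻¹(π(δ_b)) equals δ_n for n < p, and 0 for p ≤ n < p²
    ∀ n, n < p ^ 2 →
      (∑ ab ∈ Finset.HasAntidiagonal.antidiagonal n, δ ab.1 * γinv (π (δ ab.2))) =
        if n < p then δ n else 0 :=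
  stmt13_general hp δ hmul δ' π hπ γinv hγinv
end

section
/- Define τ̄ : k[G_{a,1}] → k[G_{a,1}] ⊗ k[G_{a,1}] by τ̄(δ_n) = η⁻¹(γ(δ_n)₁)₁ η(γ(δ_n)₂) ⊗ η⁻¹(γ(δ_n)₁)₂ η(γ(δ_n)₃), computed inside k[G_{a,2}] with γ, η, η⁻¹ as above. Then τ̄(δ_0) = δ_0 ⊗ δ_0, τ̄(δ_1) = Σ_{j=1}^{p−1} δ_j ⊗ δ_{p−j}, and τ̄(δ_n) = 0 for 2 ≤ n < p. -/
/-!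
Write `η n = [n < p] δ n`. For `r < p` one has `δ r * η b = C(r+b, r) • η (r+b)`, because
`C(r+b, r) ≡ 0 mod p` whenever `r, b < p ≤ r + b`. Regrouping the defining sum by
`(i, j) = (r + b, s + c)` gives `τ n = ∑_{i+j=pn} c i j • η i ⊗ η j` with
`c i j = ∑_{r ≤ i, s ≤ j, r + s < p} (-1)^(r+s) C(i,r) C(j,s)`. For `n ≥ 2` one of `i, j` is `≥ p`,
so every term vanishes. For `n = 1` and `0 < i < p`, dropping the truncation `r + s < p` adds only
the corner term `(-1)^p`, and the untruncated sum factors into alternating binomial sums, which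
vanish; hence `c i j = -(-1)^p = 1` in characteristic `p`.
-/

open Finset TensorProduct

theorem Nat.Prime.cast_choose_add_eq_zero {R : Type*} [AddGroupWithOne R] {p : ℕ} [CharP R p]
    (hp : p.Prime) {a b : ℕ} (ha : a < p) (hb : b < p) (hab : p ≤ a + b) :
    ((a + b).choose a : R) = 0 :=
  (CharP.cast_eq_zero_iff R p _).mpr (hp.dvd_choose_add ha hb hab)

theorem alternating_sum_range_choose_of_ne_zero {R : Type*} [Ring R] {n : ℕ} (hn : n ≠ 0) :
    ∑ m ∈ range (n + 1), (-1 : R) ^ m * n.choose m = 0 := by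
  simpa using congrArg (Int.cast : ℤ → R) (Int.alternating_sum_range_choose_of_ne hn)

theorem Finset.Nat.sum_antidiagonal_antidiagonal_transpose {M : Type*} [AddCommMonoid M] (N : ℕ)
    (f : ℕ × ℕ → ℕ × ℕ → M) :
    ∑ am ∈ antidiagonal N, ∑ bc ∈ antidiagonal am.2, ∑ rs ∈ antidiagonal am.1, f rs bc =
      ∑ ij ∈ antidiagonal N, ∑ rb ∈ antidiagonal ij.1, ∑ sc ∈ antidiagonal ij.2,
        f (rb.1, sc.1) (rb.2, sc.2) := by
  simp_rw [← sum_product', sum_sigma']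
  refine sum_nbij'
    (fun x => ⟨(x.2.2.1 + x.2.1.1, x.2.2.2 + x.2.1.2), ((x.2.2.1, x.2.1.1), (x.2.2.2, x.2.1.2))⟩)
    (fun y => ⟨(y.2.1.1 + y.2.2.1, y.2.1.2 + y.2.2.2), ((y.2.1.2, y.2.2.2), (y.2.1.1, y.2.2.1))⟩)
    ?_ ?_ ?_ ?_ (fun _ _ => rfl)
  all_goals
    rintro ⟨⟨a, m⟩, ⟨b, c⟩, r, s⟩ h
    simp only [mem_sigma, mem_product, HasAntidiagonal.mem_antidiagonal, and_true] at h ⊢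
  · omega
  · omega
  · obtain ⟨-, rfl, rfl⟩ := h
    simp
  · obtain ⟨-, rfl, rfl⟩ := h
    simp

def tauBarCoeff (k : Type*) [Ring k] (p i j : ℕ) : k :=
  ∑ r ∈ range (i + 1), ∑ s ∈ range (j + 1),
    if r + s < p then (-1 : k) ^ (r + s) * (i.choose r * j.choose s) else 0

theorem tauBarCoeff_eq_one {k : Type*} [CommRing k] {p : ℕ} [CharP k p] (hp : p.Prime)
    {i j : ℕ} (hij : i + j = p) (hi : i ≠ 0) : tauBarCoeff k p i j = 1 := by
  have := Fact.mk hp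
  set u : ℕ → k := fun r => (-1) ^ r * i.choose r
  set v : ℕ → k := fun s => (-1) ^ s * j.choose s
  -- the truncation `r + s < p` removes exactly the corner term `r = i, s = j`
  have hterm : ∀ r ∈ range (i + 1), ∀ s ∈ range (j + 1),
      (if r + s < p then (-1 : k) ^ (r + s) * (i.choose r * j.choose s) else 0) =
        u r * v s - (if r = i then u r else 0) * (if s = j then v s else 0) := by
    intro r hr s hs
    rw [mem_range] at hr hs
    by_cases hcorner : r = i ∧ s = j
    · obtain ⟨rfl, rfl⟩ := hcorner
      simp [hij]
    · rw [if_pos (by omega)]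
      have : (if r = i then u r else 0) * (if s = j then v s else 0) = 0 := by
        split_ifs <;> simp_all
      rw [this, sub_zero, pow_add]
      ring
  rw [tauBarCoeff, sum_congr rfl fun r hr => sum_congr rfl (hterm r hr)]
  simp only [sum_sub_distrib, ← sum_mul_sum, sum_ite_eq', mem_range, lt_add_one, if_true]
  rw [alternating_sum_range_choose_of_ne_zero hi]
  simp [u, v, ← pow_add, hij, neg_one_pow_char k p]
section TruncatedProduct

variable {k A : Type*} [CommRing k] [CommRing A] [Algebra k A] {p : ℕ} {δ η : ℕ → A}

theorem mul_trunc_eq_of_lt [CharP k p] (hp : p.Prime)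
    (hmul : ∀ m n : ℕ, δ m * δ n = (((m + n).choose m : ℕ) : k) • δ (m + n))
    (hη : ∀ n, η n = if n < p then δ n else 0) {r : ℕ} (hr : r < p) (b : ℕ) :
    δ r * η b = (((r + b).choose r : ℕ) : k) • η (r + b) := by
  rw [hη, hη]
  split_ifs with hb hrb hrb
  · exact hmul r b
  · rw [hmul, hp.cast_choose_add_eq_zero hr hb (not_lt.mp hrb), zero_smul, smul_zero]
  · omega
  · rw [mul_zero, smul_zero]

theorem sum_tauBar_eq_sum_tauBarCoeff [CharP k p] (hp : p.Prime)
    (hmul : ∀ m n : ℕ, δ m * δ n = (((m + n).choose m : ℕ) : k) • δ (m + n))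
    (hη : ∀ n, η n = if n < p then δ n else 0) (N : ℕ) :
    ∑ am ∈ antidiagonal N, ∑ bc ∈ antidiagonal am.2, ∑ rs ∈ antidiagonal am.1,
        (if am.1 < p then ((-1 : k) ^ am.1) else 0) •
          ((δ rs.1 * η bc.1) ⊗ₜ[k] (δ rs.2 * η bc.2)) =
      ∑ ij ∈ antidiagonal N, tauBarCoeff k p ij.1 ij.2 • (η ij.1 ⊗ₜ[k] η ij.2) := by
  have hterm : ∀ r s b c : ℕ,
      (if r + s < p then ((-1 : k) ^ (r + s)) else 0) • ((δ r * η b) ⊗ₜ[k] (δ s * η c)) =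
        (if r + s < p then (-1 : k) ^ (r + s) * ((r + b).choose r * (s + c).choose s) else 0) •
          (η (r + b) ⊗ₜ[k] η (s + c)) := by
    intro r s b c
    split_ifs with h
    · rw [mul_trunc_eq_of_lt hp hmul hη (by omega), mul_trunc_eq_of_lt hp hmul hη (by omega),
        smul_tmul_smul, smul_smul]
    · rw [zero_smul, zero_smul]
  calc _ = ∑ am ∈ antidiagonal N, ∑ bc ∈ antidiagonal am.2, ∑ rs ∈ antidiagonal am.1,
        (if rs.1 + rs.2 < p then (-1 : k) ^ (rs.1 + rs.2) *
          ((rs.1 + bc.1).choose rs.1 * (rs.2 + bc.2).choose rs.2) else 0) •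
          (η (rs.1 + bc.1) ⊗ₜ[k] η (rs.2 + bc.2)) := by
        refine sum_congr rfl fun am _ => sum_congr rfl fun bc _ => sum_congr rfl fun rs hrs => ?_
        rw [← HasAntidiagonal.mem_antidiagonal.mp hrs, hterm]
    _ = _ := by
        rw [Finset.Nat.sum_antidiagonal_antidiagonal_transpose]
        refine sum_congr rfl fun ij _ => ?_
        simp only [tauBarCoeff, sum_smul, Nat.sum_antidiagonal_eq_sum_range_succ_mk]
        refine sum_congr rfl fun r hr => sum_congr rfl fun s hs => ?_
        rw [mem_range] at hr hs
        rw [Nat.add_sub_of_le (by omega), Nat.add_sub_of_le (by omega)]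

end TruncatedProduct

theorem stmt15_general {k : Type*} [Field k] {p : ℕ} (hp : p.Prime) [CharP k p]
    -- A = k[G_{a,2}]
    {A : Type*} [CommRing A] [Algebra k A]
    (δ : ℕ → A)
    (hmul : ∀ m n : ℕ, δ m * δ n = (((m + n).choose m : ℕ) : k) • δ (m + n))
    -- η and η⁻¹ (as computed in Statements 13 and 14)
    (η : ℕ → A)
    (hη : ∀ n, η n = if n < p then δ n else 0)
    -- τ̄(δ_n) = Σ_{a+b+c = pn} η⁻¹(δ_a)₁ η(δ_b) ⊗ η⁻¹(δ_a)₂ η(δ_c), using γ(δ_n) = δ_{pn},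
    -- Δ²(δ_{pn}) = Σ_{a+b+c=pn} δ_a ⊗ δ_b ⊗ δ_c, Δ(η⁻¹(δ_a)) = [a<p](−1)^a Σ_{r+s=a} δ_r ⊗ δ_s
    (τ : ℕ → A ⊗[k] A)
    (hτ : ∀ n, τ n =
      ∑ am ∈ Finset.HasAntidiagonal.antidiagonal (p * n), ∑ bc ∈ Finset.HasAntidiagonal.antidiagonal am.2,
        ∑ rs ∈ Finset.HasAntidiagonal.antidiagonal am.1,
          (if am.1 < p then ((-1 : k) ^ am.1) else 0) •
            ((δ rs.1 * η bc.1) ⊗ₜ[k] (δ rs.2 * η bc.2))) :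
    τ 0 = δ 0 ⊗ₜ[k] δ 0 ∧
    τ 1 = ∑ j ∈ Finset.Ico 1 p, δ j ⊗ₜ[k] δ (p - j) ∧
    (∀ n, 2 ≤ n → n < p → τ n = 0) := by
  have hτ' : ∀ n, τ n =
      ∑ ij ∈ antidiagonal (p * n), tauBarCoeff k p ij.1 ij.2 • (η ij.1 ⊗ₜ[k] η ij.2) :=
    fun n => (hτ n).trans (sum_tauBar_eq_sum_tauBarCoeff hp hmul hη _)
  have hη_eq_zero : ∀ {n}, p ≤ n → η n = 0 := fun h => by rw [hη, if_neg (not_lt.mpr h)]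
  refine ⟨?_, ?_, fun n hn _ => ?_⟩
  · rw [hτ', mul_zero, Nat.antidiagonal_zero, sum_singleton]
    simp [tauBarCoeff, hη, hp.pos]
  · rw [hτ', mul_one, Nat.sum_antidiagonal_eq_sum_range_succ_mk, sum_range_succ, range_eq_Ico,
      sum_eq_sum_Ico_succ_bot hp.pos]
    simp only [Nat.sub_zero, Nat.sub_self, hη_eq_zero le_rfl, tmul_zero, zero_tmul, smul_zero,
      zero_add, add_zero]
    refine sum_congr rfl fun i hi => ?_
    rw [mem_Ico] at hi
    rw [tauBarCoeff_eq_one hp (Nat.add_sub_of_le hi.2.le) (by omega), one_smul, hη, hη,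
      if_pos hi.2, if_pos (by omega)]
  · rw [hτ']
    refine sum_eq_zero fun ij hij => ?_
    have h2p : 2 * p ≤ ij.1 + ij.2 := by
      rw [HasAntidiagonal.mem_antidiagonal.mp hij, mul_comm]
      exact Nat.mul_le_mul_left p hn
    rcases le_or_gt p ij.1 with h | h
    · rw [hη_eq_zero h, zero_tmul, smul_zero]
    · rw [hη_eq_zero (by omega : p ≤ ij.2), tmul_zero, smul_zero]

theorem stmt15 {k : Type*} [Field k] {p : ℕ} (hp : p.Prime) [CharP k p]
    -- A = k[G_{a,2}]
    {A : Type*} [CommRing A] [Algebra k A]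
    (δ : ℕ → A)
    (hmul : ∀ m n : ℕ, δ m * δ n = (((m + n).choose m : ℕ) : k) • δ (m + n))
    (hzero : ∀ n, p ^ 2 ≤ n → δ n = 0)
    (hone : (1 : A) = δ 0)
    (bA : Module.Basis (Fin (p ^ 2)) k A) (hbA : ∀ i : Fin (p ^ 2), bA i = δ (i : ℕ))
    -- η and η⁻¹ (as computed in Statements 13 and 14)
    (η ηinv : ℕ → A)
    (hη : ∀ n, η n = if n < p then δ n else 0)
    (hηinv : ∀ n, ηinv n = if n < p then ((-1 : k) ^ n) • δ n else 0)
    -- τ̄(δ_n) = Σ_{a+b+c = pn} η⁻¹(δ_a)₁ η(δ_b) ⊗ η⁻¹(δ_a)₂ η(δ_c), using γ(δ_n) = δ_{pn},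
    -- Δ²(δ_{pn}) = Σ_{a+b+c=pn} δ_a ⊗ δ_b ⊗ δ_c, Δ(η⁻¹(δ_a)) = [a<p](−1)^a Σ_{r+s=a} δ_r ⊗ δ_s
    (τ : ℕ → A ⊗[k] A)
    (hτ : ∀ n, τ n =
      ∑ am ∈ Finset.HasAntidiagonal.antidiagonal (p * n), ∑ bc ∈ Finset.HasAntidiagonal.antidiagonal am.2,
        ∑ rs ∈ Finset.HasAntidiagonal.antidiagonal am.1,
          (if am.1 < p then ((-1 : k) ^ am.1) else 0) •
            ((δ rs.1 * η bc.1) ⊗ₜ[k] (δ rs.2 * η bc.2))) :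
    τ 0 = δ 0 ⊗ₜ[k] δ 0 ∧
    τ 1 = ∑ j ∈ Finset.Ico 1 p, δ j ⊗ₜ[k] δ (p - j) ∧
    (∀ n, 2 ≤ n → n < p → τ n = 0) :=
  stmt15_general hp δ hmul η hη τ hτ
end

section
/- In characteristic p > 0, the element R_λ := Σ_{i=0}^{p−1} (λ^i / i!) t^i ⊗ t^i in (k[t]/(t^p)) ⊗ (k[t]/(t^p)) (with t primitive) satisfies the R-matrix axioms for the commutative cocommutative Hopf algebra k[t]/(t^p): (Δ ⊗ id)(R_λ) = R_λ,13 R_λ,23 and (id ⊗ Δ)(R_λ) = R_λ,13 R_λ,12, and R_λ is invertible with inverse R_{−λ}. -/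
/-!
`R_λ` is the truncated exponential `exp_{<p}(λ t ⊗ t)`. In characteristic `p` this truncation still
satisfies `exp_{<p}(x + y) = exp_{<p}(x) exp_{<p}(y)` for commuting `x, y` with `x^i y^j = 0`
whenever `i + j ≥ p`: the binomial expansion of `(x + y)^n / n!` for `n < p` is the part of the
product with `i + j < p`, and the rest vanishes. Since `Δ ⊗ id` is an algebra map sending `t ⊗ t`
to `t ⊗ 1 ⊗ t + 1 ⊗ t ⊗ t`, whose powers multiply to `t^i ⊗ t^j ⊗ t^(i+j)`, and `t^p = 0`,
the hexagon identities follow; `x` and `-x` give the inverse.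
-/

open TensorProduct Finset
open scoped Nat

section CharP

variable {k : Type*} [Field k] {p : ℕ} [CharP k p]

theorem cast_factorial_ne_zero_of_lt (hp : p.Prime) {n : ℕ} (hn : n < p) : (n ! : k) ≠ 0 := by
  rw [Ne, CharP.cast_eq_zero_iff k p, hp.dvd_factorial]
  omega

theorem cast_choose_mul_inv_factorial (hp : p.Prime) {m n : ℕ} (hmn : m ≤ n) (hn : n < p) :
    (n.choose m : k) * (n ! : k)⁻¹ = (m ! : k)⁻¹ * ((n - m)! : k)⁻¹ := by
  have h := Nat.choose_mul_factorial_mul_factorial hmn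
  have hm := cast_factorial_ne_zero_of_lt (k := k) hp (hmn.trans_lt hn)
  have hnm := cast_factorial_ne_zero_of_lt (k := k) hp ((n.sub_le m).trans_lt hn)
  have hn' := cast_factorial_ne_zero_of_lt (k := k) hp hn
  field_simp
  rw [← h, Nat.cast_mul, Nat.cast_mul]

end CharP

section TruncatedExponential

variable (k : Type*) [Field k] (p : ℕ) {B : Type*} [Ring B] [Algebra k B]

def truncExp (x : B) : B := ∑ i ∈ range p, (i ! : k)⁻¹ • x ^ i

variable {k p}

theorem truncExp_smul (l : k) (x : B) :
    truncExp k p (l • x) = ∑ i ∈ range p, (l ^ i * (i ! : k)⁻¹) • x ^ i := by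
  simp only [truncExp, smul_pow, smul_smul, mul_comm]

theorem map_truncExp {C : Type*} [Ring C] [Algebra k C] (f : B →ₐ[k] C) (x : B) :
    f (truncExp k p x) = truncExp k p (f x) := by
  simp only [truncExp, map_sum, map_smul, map_pow]

theorem truncExp_zero (hp : 0 < p) : truncExp k p (0 : B) = 1 := by
  rw [truncExp, sum_eq_single_of_mem 0 (mem_range.mpr hp) fun i _ hi => by simp [hi]]
  simp

theorem truncExp_add [CharP k p] (hp : p.Prime) {x y : B} (hxy : Commute x y)
    (h : ∀ i j, p ≤ i + j → x ^ i * y ^ j = 0) :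
    truncExp k p (x + y) = truncExp k p x * truncExp k p y := by
  set a : ℕ → ℕ → B := fun i j => ((i ! : k)⁻¹ • x ^ i) * ((j ! : k)⁻¹ • y ^ j)
  have binomial : ∀ n < p, (n ! : k)⁻¹ • (x + y) ^ n = ∑ m ∈ range (n + 1), a m (n - m) := by
    intro n hn
    rw [hxy.add_pow, smul_sum]
    refine sum_congr rfl fun m hm => ?_
    have hmn : m ≤ n := Nat.lt_succ_iff.mp (mem_range.mp hm)
    rw [← nsmul_eq_mul', ← Nat.cast_smul_eq_nsmul k, smul_smul, mul_comm,
      cast_choose_mul_inv_factorial hp hmn hn]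
    exact (smul_mul_smul_comm _ _ _ _).symm
  have truncate : ∀ i < p, ∑ j ∈ range p, a i j = ∑ j ∈ range (p - i), a i j := by
    intro i hi
    refine (sum_subset (range_subset_range.mpr (p.sub_le i)) fun j _ hj => ?_).symm
    rw [mem_range, not_lt] at hj
    simp only [a, smul_mul_smul_comm, h i j (by omega), smul_zero]
  calc truncExp k p (x + y) = ∑ n ∈ range p, ∑ m ∈ range (n + 1), a m (n - m) :=
        sum_congr rfl fun n hn => binomial n (mem_range.mp hn)
    _ = ∑ i ∈ range p, ∑ j ∈ range (p - i), a i j := sum_range_diag_flip p a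
    _ = truncExp k p x * truncExp k p y := by
        rw [truncExp, truncExp, sum_mul_sum]
        exact sum_congr rfl fun i hi => (truncate i (mem_range.mp hi)).symm

theorem truncExp_mul_truncExp_neg [CharP k p] (hp : p.Prime) {x : B} (hx : x ^ p = 0) :
    truncExp k p x * truncExp k p (-x) = 1 := by
  rw [← truncExp_add hp (Commute.neg_right (Commute.refl x)), add_neg_cancel, truncExp_zero hp.pos]
  intro i j hij
  rw [neg_pow', ← mul_assoc, ← pow_add, pow_eq_zero_of_le hij hx, zero_mul]

end TruncatedExponential

theorem truncExp_smul_tmul {k : Type*} [Field k] {p : ℕ} {A B : Type*} [Ring A] [Algebra k A]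
    [Ring B] [Algebra k B] (l : k) (a : A) (b : B) :
    truncExp k p (l • (a ⊗ₜ[k] b)) =
      ∑ i ∈ range p, (l ^ i * (i ! : k)⁻¹) • ((a ^ i) ⊗ₜ[k] (b ^ i)) := by
  simp only [truncExp_smul, Algebra.TensorProduct.tmul_pow]

section PrimitiveNilpotent

variable {k : Type*} [Field k] {p : ℕ} [CharP k p] {A : Type*} [CommRing A] [Bialgebra k A]
  {t : A}

theorem map_comul_id_truncExp (hp : p.Prime) (ht : t ^ p = 0)
    (hΔt : Coalgebra.comul (R := k) t = t ⊗ₜ[k] (1 : A) + (1 : A) ⊗ₜ[k] t) (l : k) :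
    Algebra.TensorProduct.map (Bialgebra.comulAlgHom k A) (AlgHom.id k A)
        (truncExp k p (l • (t ⊗ₜ[k] t))) =
      truncExp k p (l • ((t ⊗ₜ[k] (1 : A)) ⊗ₜ[k] t)) *
        truncExp k p (l • (((1 : A) ⊗ₜ[k] t) ⊗ₜ[k] t)) := by
  rw [map_truncExp, map_smul, Algebra.TensorProduct.map_tmul, Bialgebra.comulAlgHom_apply,
    AlgHom.id_apply, hΔt, add_tmul, smul_add, truncExp_add hp (Commute.all _ _)]
  intro i j hij
  simp only [smul_pow, smul_mul_smul_comm, Algebra.TensorProduct.tmul_pow, one_pow,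
    Algebra.TensorProduct.tmul_mul_tmul, mul_one, one_mul, ← pow_add, pow_eq_zero_of_le hij ht,
    tmul_zero, smul_zero]

theorem map_id_comul_truncExp (hp : p.Prime) (ht : t ^ p = 0)
    (hΔt : Coalgebra.comul (R := k) t = t ⊗ₜ[k] (1 : A) + (1 : A) ⊗ₜ[k] t) (l : k) :
    Algebra.TensorProduct.map (AlgHom.id k A) (Bialgebra.comulAlgHom k A)
        (truncExp k p (l • (t ⊗ₜ[k] t))) =
      truncExp k p (l • (t ⊗ₜ[k] ((1 : A) ⊗ₜ[k] t))) *
        truncExp k p (l • (t ⊗ₜ[k] (t ⊗ₜ[k] (1 : A)))) := by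
  rw [map_truncExp, map_smul, Algebra.TensorProduct.map_tmul, Bialgebra.comulAlgHom_apply,
    AlgHom.id_apply, hΔt, tmul_add, smul_add, add_comm, truncExp_add hp (Commute.all _ _)]
  intro i j hij
  simp only [smul_pow, smul_mul_smul_comm, Algebra.TensorProduct.tmul_pow, one_pow,
    Algebra.TensorProduct.tmul_mul_tmul, mul_one, one_mul, ← pow_add, pow_eq_zero_of_le hij ht,
    zero_tmul, smul_zero]

end PrimitiveNilpotent

theorem stmt17_general {k : Type*} [Field k] {p : ℕ} (hp : p.Prime) [CharP k p]
    -- A = k[t]/(t^p), a commutative (and cocommutative) Hopf algebra with t primitive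
    {A : Type*} [CommRing A] [HopfAlgebra k A]
    (t : A) (ht : t ^ p = 0)
    (hΔt : Coalgebra.comul (R := k) t = t ⊗ₜ[k] (1 : A) + (1 : A) ⊗ₜ[k] t)
    (lam : k)
    (R : k → A ⊗[k] A)
    (hR : ∀ l : k, R l =
      ∑ i ∈ Finset.range p, (l ^ i * ((i.factorial : k)⁻¹)) • ((t ^ i) ⊗ₜ[k] (t ^ i))) :
    -- (Δ ⊗ id)(R_λ) = R_{λ,13} R_{λ,23}
    (TensorProduct.map (Coalgebra.comul (R := k)) LinearMap.id) (R lam) =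
      (∑ i ∈ Finset.range p, (lam ^ i * ((i.factorial : k)⁻¹)) •
          (((t ^ i) ⊗ₜ[k] (1 : A)) ⊗ₜ[k] (t ^ i))) *
      (∑ i ∈ Finset.range p, (lam ^ i * ((i.factorial : k)⁻¹)) •
          (((1 : A) ⊗ₜ[k] (t ^ i)) ⊗ₜ[k] (t ^ i))) ∧
    -- (id ⊗ Δ)(R_λ) = R_{λ,13} R_{λ,12}
    (TensorProduct.map LinearMap.id (Coalgebra.comul (R := k))) (R lam) =
      (∑ i ∈ Finset.range p, (lam ^ i * ((i.factorial : k)⁻¹)) •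
          ((t ^ i) ⊗ₜ[k] ((1 : A) ⊗ₜ[k] (t ^ i)))) *
      (∑ i ∈ Finset.range p, (lam ^ i * ((i.factorial : k)⁻¹)) •
          ((t ^ i) ⊗ₜ[k] ((t ^ i) ⊗ₜ[k] (1 : A)))) ∧
    -- invertibility: R_λ · R_{−λ} = 1
    R lam * R (-lam) = 1 ∧ R (-lam) * R lam = 1 := by
  have hRexp : ∀ l, R l = truncExp k p (l • (t ⊗ₜ[k] t)) := fun l => by
    rw [hR, truncExp_smul_tmul]
  have hRinv : ∀ l, R l * R (-l) = 1 := fun l => by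
    rw [hRexp, hRexp, neg_smul]
    refine truncExp_mul_truncExp_neg hp ?_
    rw [smul_pow, Algebra.TensorProduct.tmul_pow, ht, zero_tmul, smul_zero]
  refine ⟨?_, ?_, hRinv lam, (mul_comm _ _).trans (hRinv lam)⟩
  · rw [hRexp]
    refine (map_comul_id_truncExp hp ht hΔt lam).trans ?_
    simp only [truncExp_smul_tmul, Algebra.TensorProduct.tmul_pow, one_pow]
  · rw [hRexp]
    refine (map_id_comul_truncExp hp ht hΔt lam).trans ?_
    simp only [truncExp_smul_tmul, Algebra.TensorProduct.tmul_pow, one_pow]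

theorem stmt17 {k : Type*} [Field k] {p : ℕ} (hp : p.Prime) [CharP k p]
    -- A = k[t]/(t^p), a commutative (and cocommutative) Hopf algebra with t primitive
    {A : Type*} [CommRing A] [HopfAlgebra k A]
    (t : A) (ht : t ^ p = 0)
    (hΔt : Coalgebra.comul (R := k) t = t ⊗ₜ[k] (1 : A) + (1 : A) ⊗ₜ[k] t)
    (hεt : Coalgebra.counit (R := k) t = 0)
    (hSt : HopfAlgebra.antipode (R := k) t = -t)
    (bA : Module.Basis (Fin p) k A) (hbA : ∀ i : Fin p, bA i = t ^ (i : ℕ))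
    (lam : k)
    (R : k → A ⊗[k] A)
    (hR : ∀ l : k, R l =
      ∑ i ∈ Finset.range p, (l ^ i * ((i.factorial : k)⁻¹)) • ((t ^ i) ⊗ₜ[k] (t ^ i))) :
    -- (Δ ⊗ id)(R_λ) = R_{λ,13} R_{λ,23}
    (TensorProduct.map (Coalgebra.comul (R := k)) LinearMap.id) (R lam) =
      (∑ i ∈ Finset.range p, (lam ^ i * ((i.factorial : k)⁻¹)) •
          (((t ^ i) ⊗ₜ[k] (1 : A)) ⊗ₜ[k] (t ^ i))) *
      (∑ i ∈ Finset.range p, (lam ^ i * ((i.factorial : k)⁻¹)) •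
          (((1 : A) ⊗ₜ[k] (t ^ i)) ⊗ₜ[k] (t ^ i))) ∧
    -- (id ⊗ Δ)(R_λ) = R_{λ,13} R_{λ,12}
    (TensorProduct.map LinearMap.id (Coalgebra.comul (R := k))) (R lam) =
      (∑ i ∈ Finset.range p, (lam ^ i * ((i.factorial : k)⁻¹)) •
          ((t ^ i) ⊗ₜ[k] ((1 : A) ⊗ₜ[k] (t ^ i)))) *
      (∑ i ∈ Finset.range p, (lam ^ i * ((i.factorial : k)⁻¹)) •
          ((t ^ i) ⊗ₜ[k] ((t ^ i) ⊗ₜ[k] (1 : A)))) ∧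
    -- invertibility: R_λ · R_{−λ} = 1
    R lam * R (-lam) = 1 ∧ R (-lam) * R lam = 1 :=
  stmt17_general hp t ht hΔt lam R hR
end
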